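/- arXiv:2103.11839 — 6 statements merged into one kernel-verified Lean document; each statement's English description precedes it below -/
import Mathlib

section
/- Let m ≥ 1 be an integer and let x be a real number with 0 < x < 1. Then ∫₀ˣ log^m(1−t)/t dt = log(x)·log^m(1−x) + Σ_{k=0}^{m−2} (−1)^k (m−k)_{k+1} log^{m−k−1}(1−x)·Li_{k+2}(1−x) + (−1)^{m−1} m!·Li_{m+1}(1−x) + (−1)^m m!·ζ(m+1). Moreover, ∫₀¹ log^m(1−t)/t dt = (−1)^m m!·ζ(m+1). -/
/-!
Substituting `u = 1 - t` turns the integral into `∫_{1-x}^1 log^m u / (1 - u) du`. Expanding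
`1 / (1 - u) = ∑ uⁿ`, each term has the elementary antiderivative
`∑_j (-1)^j m!/(m-j)! · u^{n+1} log^{m-j} u / (n+1)^{j+1}`. Its value at `1` is
`(-1)^m m! / (n+1)^{m+1}`, which sums over `n` to `(-1)^m m! ζ(m+1)`, while at `a = 1 - x` the
sums over `n` are the polylogarithms `Li_{j+1}(a)`, with `Li_1(1 - x) = -log x`. Termwise
integration is legitimate because every term has the constant sign `(-1)^m` on `(0, 1)`.
-/

/-- `Li p x = ∑_{n≥1} x^n / n^p`, the polylogarithm. -/
noncomputable def Li (p : ℕ) (x : ℝ) : ℝ := ∑' n : ℕ, x ^ (n + 1) / (n + 1 : ℝ) ^ p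

/-- `zr s = ζ(s) = ∑_{n≥1} n^{-s}`. -/
noncomputable def zr (s : ℕ) : ℝ := ∑' n : ℕ, 1 / (n + 1 : ℝ) ^ s

/-- Pochhammer symbol `(t)_k = t(t+1)⋯(t+k-1)`. -/
noncomputable def poch (t : ℝ) (k : ℕ) : ℝ := ∏ i ∈ Finset.range k, (t + i)

open Real MeasureTheory Finset intervalIntegral Filter Set Topology

noncomputable def powLogAntideriv (n m : ℕ) (u : ℝ) : ℝ :=
  ∑ j ∈ range (m + 1),
    (-1 : ℝ) ^ j * m.descFactorial j * u ^ (n + 1) * log u ^ (m - j) / ((n : ℝ) + 1) ^ (j + 1)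

lemma powLogAntideriv_zero (n : ℕ) (u : ℝ) :
    powLogAntideriv n 0 u = u ^ (n + 1) / ((n : ℝ) + 1) := by
  simp [powLogAntideriv]

lemma powLogAntideriv_succ (n m : ℕ) (u : ℝ) :
    powLogAntideriv n (m + 1) u = u ^ (n + 1) * log u ^ (m + 1) / ((n : ℝ) + 1)
      - ((m : ℝ) + 1) / ((n : ℝ) + 1) * powLogAntideriv n m u := by
  have hn : ((n : ℝ) + 1) ≠ 0 := by positivity
  have hterm : ∀ j ∈ range (m + 1),
      (-1 : ℝ) ^ (j + 1) * ((m + 1).descFactorial (j + 1) : ℕ) * u ^ (n + 1)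
        * log u ^ (m + 1 - (j + 1)) / ((n : ℝ) + 1) ^ (j + 1 + 1)
      = -(((m : ℝ) + 1) / ((n : ℝ) + 1) * ((-1 : ℝ) ^ j * m.descFactorial j * u ^ (n + 1)
        * log u ^ (m - j) / ((n : ℝ) + 1) ^ (j + 1))) := by
    intro j _
    rw [Nat.succ_descFactorial_succ, Nat.add_sub_add_right]
    push_cast
    field_simp
    ring
  rw [powLogAntideriv, sum_range_succ', sum_congr rfl hterm, sum_neg_distrib, powLogAntideriv,
    mul_sum]
  simp only [pow_zero, Nat.descFactorial_zero, Nat.cast_one, mul_one, one_mul, tsub_zero, zero_add,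
    pow_one]
  ring

lemma hasDerivAt_powLogAntideriv (n m : ℕ) {u : ℝ} (hu : 0 < u) :
    HasDerivAt (powLogAntideriv n m) (u ^ n * log u ^ m) u := by
  have hn : ((n : ℝ) + 1) ≠ 0 := by positivity
  induction m with
  | zero =>
    rw [funext (powLogAntideriv_zero n)]
    refine ((hasDerivAt_pow (n + 1) u).div_const _).congr_deriv ?_
    push_cast
    field_simp
  | succ m ih =>
    have hlog := (hasDerivAt_log hu.ne').pow (m + 1)
    rw [funext (powLogAntideriv_succ n m)]
    refine ((((hasDerivAt_pow (n + 1) u).mul hlog).div_const ((n : ℝ) + 1)).sub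
      (ih.const_mul (((m : ℝ) + 1) / ((n : ℝ) + 1)))).congr_deriv ?_
    simp only [Pi.pow_apply, Nat.add_sub_cancel]
    push_cast
    field_simp
    ring

lemma powLogAntideriv_apply_one (n m : ℕ) :
    powLogAntideriv n m 1 = (-1 : ℝ) ^ m * m.factorial / ((n : ℝ) + 1) ^ (m + 1) := by
  have hn : ((n : ℝ) + 1) ≠ 0 := by positivity
  induction m with
  | zero => simp [powLogAntideriv_zero]
  | succ m ih =>
    rw [powLogAntideriv_succ, ih, log_one, Nat.factorial_succ]
    push_cast
    field_simp
    ring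

lemma tendsto_pow_succ_mul_log_pow_nhdsGT_zero (n p : ℕ) :
    Tendsto (fun u : ℝ => u ^ (n + 1) * log u ^ p) (𝓝[>] 0) (𝓝 0) := by
  rcases p.eq_zero_or_pos with rfl | hp
  · simpa using ((continuous_pow (n + 1)).tendsto' 0 0 (by simp)).mono_left nhdsWithin_le_nhds
  have hr : (0 : ℝ) < (p : ℝ)⁻¹ := by positivity
  have h := (((continuous_pow n).tendsto (0 : ℝ)).mono_left nhdsWithin_le_nhds).mul
    ((tendsto_log_mul_rpow_nhdsGT_zero hr).pow p)
  rw [zero_pow hp.ne', mul_zero] at h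
  refine h.congr' (eventually_mem_nhdsWithin.mono fun u (hu : 0 < u) => ?_)
  rw [mul_pow, rpow_inv_natCast_pow hu.le hp.ne']
  ring

lemma continuousOn_pow_succ_mul_log_pow (n p : ℕ) :
    ContinuousOn (fun u : ℝ => u ^ (n + 1) * log u ^ p) (Ici 0) := by
  intro u hu
  rcases (mem_Ici.1 hu).eq_or_lt with rfl | hu
  · rw [← continuousWithinAt_Ioi_iff_Ici, ContinuousWithinAt]
    simpa using tendsto_pow_succ_mul_log_pow_nhdsGT_zero n p
  · exact ((continuous_pow _).continuousAt.mul ((continuousAt_log hu.ne').pow p)).continuousWithinAt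

lemma continuousOn_powLogAntideriv (n m : ℕ) : ContinuousOn (powLogAntideriv n m) (Ici 0) :=
  continuousOn_finsetSum _ fun j _ =>
    ((continuousOn_const (c := (-1 : ℝ) ^ j * m.descFactorial j)).mul
      (continuousOn_pow_succ_mul_log_pow n (m - j))).div_const (((n : ℝ) + 1) ^ (j + 1)) |>.congr
      fun u _ => by simp only [Pi.mul_apply]; ring

lemma norm_pow_mul_log_pow (n m : ℕ) {u : ℝ} (hu0 : 0 ≤ u) (hu1 : u ≤ 1) :
    ‖u ^ n * log u ^ m‖ = (-1 : ℝ) ^ m * (u ^ n * log u ^ m) := by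
  rw [norm_eq_abs, abs_mul, abs_pow, abs_pow, abs_of_nonneg hu0, abs_of_nonpos (log_nonpos hu0 hu1),
    neg_pow]
  ring

lemma intervalIntegrable_pow_mul_log_pow (n m : ℕ) {a : ℝ} (ha : 0 ≤ a) (ha1 : a ≤ 1) :
    IntervalIntegrable (fun u : ℝ => u ^ n * log u ^ m) volume a 1 := by
  have h : IntervalIntegrable (fun u => (-1 : ℝ) ^ m * (u ^ n * log u ^ m)) volume a 1 := by
    refine intervalIntegrable_deriv_of_nonneg (g := fun u => (-1 : ℝ) ^ m * powLogAntideriv n m u)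
      ?_ (fun u hu => ?_) (fun u hu => ?_)
    · rw [uIcc_of_le ha1]
      exact (continuousOn_const.mul (continuousOn_powLogAntideriv n m)).mono
        ((Icc_subset_Ici_iff ha1).2 ha)
    · rw [min_eq_left ha1, max_eq_right ha1] at hu
      exact (hasDerivAt_powLogAntideriv n m (ha.trans_lt hu.1)).const_mul _
    · rw [min_eq_left ha1, max_eq_right ha1] at hu
      rw [← norm_pow_mul_log_pow n m (ha.trans hu.1.le) hu.2.le]
      exact norm_nonneg _
  simpa [← mul_assoc, ← mul_pow] using h.const_mul ((-1 : ℝ) ^ m)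

lemma integral_pow_mul_log_pow (n m : ℕ) {a : ℝ} (ha : 0 ≤ a) (ha1 : a ≤ 1) :
    ∫ u in a..1, u ^ n * log u ^ m = powLogAntideriv n m 1 - powLogAntideriv n m a :=
  integral_eq_sub_of_hasDerivAt_of_le ha1
    ((continuousOn_powLogAntideriv n m).mono ((Icc_subset_Ici_iff ha1).2 ha))
    (fun _ hu => hasDerivAt_powLogAntideriv n m (ha.trans_lt hu.1))
    (intervalIntegrable_pow_mul_log_pow n m ha ha1)

lemma hasSum_zr {s : ℕ} (hs : 2 ≤ s) : HasSum (fun n : ℕ => 1 / ((n : ℝ) + 1) ^ s) (zr s) := by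
  refine Summable.hasSum ?_
  simpa using (summable_nat_add_iff 1).2 (Real.summable_one_div_nat_pow.2 hs)

lemma hasSum_Li (p : ℕ) {a : ℝ} (ha : |a| < 1) :
    HasSum (fun n : ℕ => a ^ (n + 1) / ((n : ℝ) + 1) ^ p) (Li p a) := by
  refine Summable.hasSum (Summable.of_norm_bounded
    ((summable_geometric_of_lt_one (abs_nonneg a) ha).mul_left |a|) fun n => ?_)
  rw [norm_div, norm_pow, norm_pow, ← pow_succ', norm_eq_abs]
  exact div_le_self (by positivity) (one_le_pow₀ (by rw [norm_of_nonneg (by positivity)]; simp))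

lemma Li_zero_right (p : ℕ) : Li p 0 = 0 := by
  simp [Li]

lemma Li_one_left {a : ℝ} (ha : |a| < 1) : Li 1 a = -log (1 - a) :=
  (hasSum_Li 1 ha).unique (by simpa using hasSum_pow_div_log_of_abs_lt_one ha)

lemma hasSum_powLogAntideriv_one {m : ℕ} (hm : 1 ≤ m) :
    HasSum (fun n => powLogAntideriv n m 1) ((-1 : ℝ) ^ m * m.factorial * zr (m + 1)) := by
  refine ((hasSum_zr (by omega : 2 ≤ m + 1)).mul_left ((-1 : ℝ) ^ m * m.factorial)).congr_fun
    fun n => ?_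
  rw [powLogAntideriv_apply_one, mul_one_div]

lemma hasSum_powLogAntideriv (m : ℕ) {a : ℝ} (ha : |a| < 1) :
    HasSum (fun n => powLogAntideriv n m a)
      (∑ j ∈ range (m + 1), (-1 : ℝ) ^ j * m.descFactorial j * log a ^ (m - j) * Li (j + 1) a) :=
  hasSum_sum fun j _ => ((hasSum_Li (j + 1) ha).mul_left
    ((-1 : ℝ) ^ j * m.descFactorial j * log a ^ (m - j))).congr_fun fun n => by ring

lemma integral_log_pow_div_one_sub {m : ℕ} (hm : 1 ≤ m) {a : ℝ} (ha : 0 ≤ a) (ha1 : a < 1) :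
    ∫ u in a..1, log u ^ m / (1 - u) = (-1 : ℝ) ^ m * m.factorial * zr (m + 1)
      - ∑ j ∈ range (m + 1), (-1 : ℝ) ^ j * m.descFactorial j * log a ^ (m - j) * Li (j + 1) a := by
  have hterms := (hasSum_powLogAntideriv_one hm).sub
    (hasSum_powLogAntideriv m (abs_lt.2 ⟨by linarith, ha1⟩))
  have hint : ∀ n : ℕ, IntegrableOn (fun u : ℝ => u ^ n * log u ^ m) (Ioo a 1) := fun n =>
    (intervalIntegrable_pow_mul_log_pow n m ha ha1.le).1.mono_set Ioo_subset_Ioc_self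
  have hF : ∀ n : ℕ, ∫ u in Ioo a 1, u ^ n * log u ^ m
      = powLogAntideriv n m 1 - powLogAntideriv n m a := fun n => by
    rw [← integral_Ioc_eq_integral_Ioo, ← integral_of_le ha1.le,
      integral_pow_mul_log_pow n m ha ha1.le]
  have hnorm : ∀ n : ℕ, ∫ u in Ioo a 1, ‖u ^ n * log u ^ m‖
      = (-1 : ℝ) ^ m * (powLogAntideriv n m 1 - powLogAntideriv n m a) := fun n => by
    rw [← hF, ← MeasureTheory.integral_const_mul]
    exact setIntegral_congr_fun measurableSet_Ioo fun u hu =>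
      norm_pow_mul_log_pow n m (ha.trans hu.1.le) hu.2.le
  have hgeom : ∀ u ∈ Ioo a 1, log u ^ m / (1 - u) = ∑' n : ℕ, u ^ n * log u ^ m := fun u hu => by
    rw [tsum_mul_right, tsum_geometric_of_lt_one (ha.trans hu.1.le) hu.2, div_eq_inv_mul]
  have hswap := hasSum_integral_of_summable_integral_norm hint
    (by simpa only [hnorm] using (hterms.mul_left ((-1 : ℝ) ^ m)).summable)
  rw [integral_of_le ha1.le, integral_Ioc_eq_integral_Ioo,
    setIntegral_congr_fun measurableSet_Ioo hgeom]
  exact hswap.unique (by simpa only [hF] using hterms)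

lemma poch_sub_eq_descFactorial {m j : ℕ} (h : j < m) :
    poch ((m : ℝ) - j) (j + 1) = m.descFactorial (j + 1) := by
  rw [poch, Nat.descFactorial_eq_prod_range, Nat.cast_prod,
    ← prod_range_reflect (fun i => ((m - i : ℕ) : ℝ)) (j + 1)]
  refine prod_congr rfl fun i hi => ?_
  rw [Finset.mem_range] at hi
  rw [Nat.add_sub_cancel, Nat.cast_sub (by omega : j - i ≤ m), Nat.cast_sub (by omega : i ≤ j)]
  ring

lemma sum_descFactorial_mul_eq_poch_sum (f : ℕ → ℝ) (L : ℝ) {m : ℕ} (hm : 1 ≤ m) :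
    ∑ j ∈ range (m + 1), (-1 : ℝ) ^ j * m.descFactorial j * L ^ (m - j) * f (j + 1)
      = L ^ m * f 1
        - ∑ k ∈ range (m - 1),
            (-1 : ℝ) ^ k * poch ((m : ℝ) - k) (k + 1) * L ^ (m - k - 1) * f (k + 2)
        - (-1 : ℝ) ^ (m - 1) * m.factorial * f (m + 1) := by
  obtain ⟨m, rfl⟩ : ∃ m', m = m' + 1 := ⟨m - 1, by omega⟩
  have hterm : ∀ k ∈ range m,
      (-1 : ℝ) ^ (k + 1) * (m + 1).descFactorial (k + 1) * L ^ (m + 1 - (k + 1)) * f (k + 1 + 1)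
        = -((-1 : ℝ) ^ k * poch (((m + 1 : ℕ) : ℝ) - k) (k + 1) * L ^ (m + 1 - k - 1)
          * f (k + 2)) := by
    intro k hk
    rw [poch_sub_eq_descFactorial (Nat.lt_succ_of_lt (Finset.mem_range.1 hk)),
      show m + 1 - k - 1 = m - k by omega, Nat.add_sub_add_right]
    ring
  rw [sum_range_succ, sum_range_succ', sum_congr rfl hterm, sum_neg_distrib, Nat.descFactorial_self]
  simp only [Nat.add_sub_cancel, Nat.sub_self, pow_zero, Nat.descFactorial_zero, pow_succ]
  push_cast
  ring

theorem stmt0 (m : ℕ) (hm : 1 ≤ m) (x : ℝ) (hx0 : 0 < x) (hx1 : x < 1) :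
    (∫ t in (0:ℝ)..x, (Real.log (1 - t)) ^ m / t) =
      Real.log x * (Real.log (1 - x)) ^ m
      + ∑ k ∈ Finset.range (m - 1), (-1 : ℝ) ^ k * poch ((m : ℝ) - k) (k + 1)
          * (Real.log (1 - x)) ^ (m - k - 1) * Li (k + 2) (1 - x)
      + (-1 : ℝ) ^ (m - 1) * (m.factorial : ℝ) * Li (m + 1) (1 - x)
      + (-1 : ℝ) ^ m * (m.factorial : ℝ) * zr (m + 1) ∧
    (∫ t in (0:ℝ)..1, (Real.log (1 - t)) ^ m / t) =
      (-1 : ℝ) ^ m * (m.factorial : ℝ) * zr (m + 1) := by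
  have hsubst : ∀ y : ℝ, ∫ t in (0:ℝ)..y, log (1 - t) ^ m / t
      = ∫ u in (1 - y)..1, log u ^ m / (1 - u) := fun y => by
    simpa using integral_comp_sub_left (fun u => log u ^ m / (1 - u)) 1 (a := 0) (b := y)
  refine ⟨?_, ?_⟩
  · rw [hsubst, integral_log_pow_div_one_sub hm (by linarith) (by linarith),
      sum_descFactorial_mul_eq_poch_sum (fun p => Li p (1 - x)) _ hm,
      Li_one_left (abs_lt.2 ⟨by linarith, by linarith⟩), sub_sub_cancel]
    ring
  · rw [hsubst, sub_self, integral_log_pow_div_one_sub hm le_rfl one_pos]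
    simp [Li_zero_right]
end

section
/- Let m ≥ 1 be an integer and let x > 0 be a real number. Then ∫₀ˣ log^m(1+t)/t dt = log(x)·log^m(1+x) − (m/(m+1))·log^{m+1}(1+x) + m!·ζ(m+1) − Σ_{i=1}^{m} C(m,i)·i!·log^{m−i}(1+x)·Li_{i+1}(1/(1+x)), where C(m,i) is the binomial coefficient. -/
/-!
Dropping the constant `m! ζ(m+1)`, the right-hand side is an explicit primitive `G` of
`log^m(1+t)/t` on `(0, ∞)`. Since `d/dt Li_{i+1}(1/(1+t)) = -Li_i(1/(1+t))/(1+t)` and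
`m!/(m-i)! · (m-i) = m!/(m-i-1)!`, the derivatives of the terms of the sum telescope to
`-m log^{m-1}(1+t) Li_1(1/(1+t))/(1+t)`, and `Li_1(1/(1+t)) = log(1+t) - log t` cancels what is
left of the first two terms. `G` extends continuously to `0` with `G(0) = -m! ζ(m+1)` (only the
`i = m` term survives, and `Li_{m+1}(1) = ζ(m+1)`), and the integrand is nonnegative, hence
integrable, so the fundamental theorem of calculus applies on `[0, x]`.
-/

open Real Set Filter Topology MeasureTheory

theorem summable_one_div_succ_pow {p : ℕ} (hp : 2 ≤ p) :
    Summable fun n : ℕ => 1 / (n + 1 : ℝ) ^ p := by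
  simpa using (summable_nat_add_iff 1).2 (summable_one_div_nat_pow.2 hp)

theorem Li_one (p : ℕ) : Li p 1 = zr p := by simp [Li, zr]

theorem Li_one_eq_neg_log_one_sub {y : ℝ} (hy : |y| < 1) : Li 1 y = -log (1 - y) := by
  simp only [Li, pow_one, ← (hasSum_pow_div_log_of_abs_lt_one hy).tsum_eq]

theorem continuousOn_Li {p : ℕ} (hp : 2 ≤ p) : ContinuousOn (Li p) (Icc (-1) 1) := by
  refine continuousOn_tsum (fun n => ((continuous_pow _).div_const _).continuousOn)
    (summable_one_div_succ_pow hp) fun n y hy => ?_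
  rw [norm_div, norm_pow, norm_pow, norm_eq_abs, norm_of_nonneg (by positivity : (0:ℝ) ≤ n + 1)]
  gcongr
  exact pow_le_one₀ (abs_nonneg y) (abs_le.2 hy)

theorem hasDerivAt_Li_succ (p : ℕ) {y : ℝ} (hy0 : y ≠ 0) (hy : |y| < 1) :
    HasDerivAt (Li (p + 1)) (Li p y / y) y := by
  obtain ⟨r, hyr, hr1⟩ := exists_between hy
  have hr0 : 0 < r := (abs_nonneg y).trans_lt hyr
  have hLi : Li p y / y = ∑' n : ℕ, y ^ n / (n + 1 : ℝ) ^ p := by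
    rw [div_eq_iff hy0, ← tsum_mul_right, Li]
    simp only [pow_succ, div_mul_eq_mul_div]
  rw [hLi, show Li (p + 1) = fun z => ∑' n : ℕ, z ^ (n + 1) / (n + 1 : ℝ) ^ (p + 1) from rfl]
  refine hasDerivAt_tsum_of_isPreconnected (t := Ioo (-r) r) (u := fun n : ℕ => r ^ n) (y₀ := 0)
    (g' := fun n z => z ^ n / (n + 1 : ℝ) ^ p)
    (summable_geometric_of_lt_one hr0.le hr1) isOpen_Ioo isPreconnected_Ioo
    (fun n z _ => ?_) (fun n z hz => ?_) ⟨neg_lt_zero.2 hr0, hr0⟩ (by simp) (abs_lt.1 hyr)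
  · refine ((hasDerivAt_pow (n + 1) z).div_const _).congr_deriv ?_
    push_cast
    field_simp
    ring
  · rw [norm_div, norm_pow, norm_eq_abs, norm_of_nonneg (by positivity)]
    calc |z| ^ n / (n + 1 : ℝ) ^ p ≤ |z| ^ n :=
          div_le_self (by positivity) (one_le_pow₀ (by linarith [n.cast_nonneg (α := ℝ)]))
      _ ≤ r ^ n := pow_le_pow_left₀ (abs_nonneg z) (abs_le.2 ⟨hz.1.le, hz.2.le⟩) n

theorem abs_one_div_one_add_lt_one {t : ℝ} (ht : 0 < t) : |1 / (1 + t)| < 1 := by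
  rw [abs_of_pos (by positivity), div_lt_one (by positivity)]
  linarith

theorem Li_one_one_div_one_add {t : ℝ} (ht : 0 < t) :
    Li 1 (1 / (1 + t)) = log (1 + t) - log t := by
  rw [Li_one_eq_neg_log_one_sub (abs_one_div_one_add_lt_one ht),
    show 1 - 1 / (1 + t) = t / (1 + t) by field_simp; ring, log_div ht.ne' (by positivity)]
  ring

theorem hasDerivAt_log_one_add {t : ℝ} (ht : -1 < t) :
    HasDerivAt (fun s => log (1 + s)) (1 / (1 + t)) t :=
  ((hasDerivAt_id' t).const_add 1).log (by linarith)

theorem hasDerivAt_Li_succ_one_div_one_add (p : ℕ) {t : ℝ} (ht : 0 < t) :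
    HasDerivAt (fun s => Li (p + 1) (1 / (1 + s))) (-(Li p (1 / (1 + t)) / (1 + t))) t := by
  have hinv : HasDerivAt (fun s : ℝ => 1 / (1 + s)) (-1 / (1 + t) ^ 2) t := by
    simpa [one_div] using ((hasDerivAt_id' t).const_add 1).fun_inv (by positivity)
  refine ((hasDerivAt_Li_succ p (by positivity) (abs_one_div_one_add_lt_one ht)).comp t
    hinv).congr_deriv ?_
  field_simp

theorem continuousOn_Li_one_div_one_add {p : ℕ} (hp : 2 ≤ p) :
    ContinuousOn (fun s => Li p (1 / (1 + s))) (Ici 0) := by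
  refine (continuousOn_Li hp).comp (by fun_prop (disch := intro s hs; simp at hs; linarith))
    fun s (hs : 0 ≤ s) => ⟨by linarith [show 0 < 1 / (1 + s) by positivity], ?_⟩
  rw [div_le_one (by positivity)]
  linarith

noncomputable def polylogSum (m : ℕ) (s : ℝ) : ℝ :=
  ∑ i ∈ Finset.Icc 1 m,
    (m.descFactorial i : ℝ) * log (1 + s) ^ (m - i) * Li (i + 1) (1 / (1 + s))

theorem continuousOn_polylogSum (m : ℕ) : ContinuousOn (polylogSum m) (Ici 0) := by
  have hlog : ContinuousOn (fun s : ℝ => log (1 + s)) (Ici 0) :=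
    by fun_prop (disch := intro s hs; simp at hs; linarith)
  exact continuousOn_finsetSum _ fun i hi => (continuousOn_const.mul (hlog.pow _)).mul
    (continuousOn_Li_one_div_one_add (by linarith [(Finset.mem_Icc.1 hi).1]))

theorem hasDerivAt_polylogSum {m : ℕ} (hm : 1 ≤ m) {t : ℝ} (ht : 0 < t) :
    HasDerivAt (polylogSum m)
      (-(m * log (1 + t) ^ (m - 1) * (log (1 + t) - log t)) / (1 + t)) t := by
  set T : ℕ → ℝ := fun j => m.descFactorial j * log (1 + t) ^ (m - j) * Li j (1 / (1 + t))
  have hterm (i : ℕ) : HasDerivAt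
      (fun s => (m.descFactorial i : ℝ) * log (1 + s) ^ (m - i) * Li (i + 1) (1 / (1 + s)))
      ((T (i + 1) - T i) / (1 + t)) t := by
    refine ((((hasDerivAt_log_one_add (by linarith)).fun_pow (m - i)).const_mul _).mul
      (hasDerivAt_Li_succ_one_div_one_add i ht)).congr_deriv ?_
    simp only [T, Nat.descFactorial_succ, Nat.sub_sub, Nat.cast_mul]
    field_simp
    ring
  have hsum := HasDerivAt.fun_sum (u := Finset.Icc 1 m) fun i _ => hterm i
  rw [← Finset.sum_div, Finset.sum_Icc_sub hm] at hsum
  have hT1 : T 1 = m * log (1 + t) ^ (m - 1) * (log (1 + t) - log t) := by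
    simp only [T, Nat.descFactorial_one, Li_one_one_div_one_add ht]
  have hTm : T (m + 1) = 0 := by
    simp only [T, Nat.descFactorial_of_lt (Nat.lt_succ_self m), Nat.cast_zero, zero_mul]
  rw [hT1, hTm, zero_sub] at hsum
  exact hsum

noncomputable def primitiveLogPowDiv (m : ℕ) (s : ℝ) : ℝ :=
  log s * log (1 + s) ^ m - m / (m + 1) * log (1 + s) ^ (m + 1) - polylogSum m s

theorem hasDerivAt_primitiveLogPowDiv {m : ℕ} (hm : 1 ≤ m) {t : ℝ} (ht : 0 < t) :
    HasDerivAt (primitiveLogPowDiv m) (log (1 + t) ^ m / t) t := by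
  have hlog := hasDerivAt_log_one_add (show -1 < t by linarith)
  refine ((((hasDerivAt_log ht.ne').mul (hlog.fun_pow m)).sub
    ((hlog.fun_pow (m + 1)).const_mul _)).sub (hasDerivAt_polylogSum hm ht)).congr_deriv ?_
  push_cast
  field_simp
  rw [← pow_sub_one_mul (by omega : m ≠ 0) (log (1 + t))]
  ring

theorem continuousWithinAt_log_mul_log_one_add_pow {m : ℕ} (hm : m ≠ 0) :
    ContinuousWithinAt (fun s => log s * log (1 + s) ^ m) (Ici 0) 0 := by
  rw [← continuousWithinAt_Ioi_iff_Ici, ContinuousWithinAt]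
  simp only [add_zero, log_one, log_zero, zero_mul]
  have hbound : Tendsto (fun s : ℝ => |log s * s ^ (m : ℝ)|) (𝓝[>] 0) (𝓝 0) := by
    simpa using (tendsto_log_mul_rpow_nhdsGT_zero (Nat.cast_pos.2 (Nat.pos_of_ne_zero hm))).abs
  refine squeeze_zero_norm' ?_ hbound
  filter_upwards [self_mem_nhdsWithin] with s (hs : 0 < s)
  have hlog0 : 0 ≤ log (1 + s) := log_nonneg (by linarith)
  have hlogs : log (1 + s) ≤ s := by linarith [log_le_sub_one_of_pos (by linarith : 0 < 1 + s)]
  rw [norm_mul, norm_of_nonneg (pow_nonneg hlog0 m), norm_eq_abs, abs_mul, rpow_natCast, abs_pow,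
    abs_of_pos hs]
  gcongr

theorem continuousOn_primitiveLogPowDiv {m : ℕ} (hm : 1 ≤ m) :
    ContinuousOn (primitiveLogPowDiv m) (Ici 0) := by
  intro s (hs : 0 ≤ s)
  rcases hs.eq_or_lt with rfl | hs
  · have hlog : ContinuousWithinAt (fun s : ℝ => log (1 + s)) (Ici 0) 0 :=
      by fun_prop (disch := norm_num)
    exact ((continuousWithinAt_log_mul_log_one_add_pow (by omega)).sub
      (continuousWithinAt_const.mul (hlog.pow _))).sub (continuousOn_polylogSum m 0 self_mem_Ici)
  · exact (hasDerivAt_primitiveLogPowDiv hm hs).continuousAt.continuousWithinAt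

theorem primitiveLogPowDiv_zero {m : ℕ} (hm : 1 ≤ m) :
    primitiveLogPowDiv m 0 = -(m.factorial * zr (m + 1)) := by
  have hsum : polylogSum m 0 = m.factorial * zr (m + 1) := by
    rw [polylogSum, Finset.sum_eq_single_of_mem m (Finset.mem_Icc.2 ⟨hm, le_rfl⟩)]
    · simp [Nat.descFactorial_self, Li_one]
    · intro i hi him
      simp [Nat.sub_ne_zero_of_lt (lt_of_le_of_ne (Finset.mem_Icc.1 hi).2 him)]
  simp [primitiveLogPowDiv, hsum]

theorem stmt1 (m : ℕ) (hm : 1 ≤ m) (x : ℝ) (hx : 0 < x) :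
    (∫ t in (0:ℝ)..x, (Real.log (1 + t)) ^ m / t) =
      Real.log x * (Real.log (1 + x)) ^ m
      - ((m : ℝ) / (m + 1)) * (Real.log (1 + x)) ^ (m + 1)
      + (m.factorial : ℝ) * zr (m + 1)
      - ∑ i ∈ Finset.Icc 1 m, (m.choose i : ℝ) * (i.factorial : ℝ)
          * (Real.log (1 + x)) ^ (m - i) * Li (i + 1) (1 / (1 + x)) := by
  have hderiv (t : ℝ) (ht : t ∈ Ioo 0 x) :
      HasDerivAt (primitiveLogPowDiv m) (log (1 + t) ^ m / t) t :=
    hasDerivAt_primitiveLogPowDiv hm ht.1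
  have hcont : ContinuousOn (primitiveLogPowDiv m) (Icc 0 x) :=
    (continuousOn_primitiveLogPowDiv hm).mono Icc_subset_Ici_self
  have hint : IntervalIntegrable (fun t => log (1 + t) ^ m / t) volume 0 x :=
    (intervalIntegrable_iff_integrableOn_Ioc_of_le hx.le).2 <|
      intervalIntegral.integrableOn_deriv_of_nonneg hcont hderiv fun t ht =>
        div_nonneg (pow_nonneg (log_nonneg (by linarith [ht.1])) m) ht.1.le
  rw [intervalIntegral.integral_eq_sub_of_hasDerivAt_of_le hx.le hcont hderiv hint,
    primitiveLogPowDiv_zero hm, primitiveLogPowDiv, polylogSum]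
  simp only [Nat.descFactorial_eq_factorial_mul_choose, Nat.cast_mul,
    mul_comm ((Nat.factorial _ : ℕ) : ℝ)]
  ring
end

section
/- Let m, n be integers with m ≥ n ≥ 2 and let x be a real number with 0 < x < 1. Write A(r,s,y) := ∫₀^y log^r(1−t)/t^s dt. For 0 ≤ y ≤ n−2, let T_y be the set of integer chains (i_0, i_1, …, i_y) with i_0 = n and i_{j−1} > i_j ≥ 2 for 1 ≤ j ≤ y (for y = 0 the chain is the single entry i_0 = n), and for such a chain set W := ∏_{j=0}^{y} 1/(i_j − 1). Then A(m,n,x) = Σ_{y=0}^{n−2} C(m,y)·y!·(−1)^{y+1} Σ_{(i_0,…,i_y)∈T_y} W·log^{m−y}(1−x)/x^{i_y−1} + Σ_{y=0}^{n−2} C(m,y)·y!·(−1)^{y} Σ_{(i_0,…,i_y)∈T_y} W·log^{m−y}(1−x) + Σ_{y=0}^{n−2} C(m,y+1)·(y+1)!·(−1)^{y+1} Σ_{(i_0,…,i_y)∈T_y} W·A(m−y−1,1,x), where C(m,y) denotes the binomial coefficient. -/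
/-- `A r s y = ∫₀^y log^r(1-t)/t^s dt`. -/
noncomputable def Aint (r s : ℕ) (y : ℝ) : ℝ := ∫ t in (0:ℝ)..y, (Real.log (1 - t)) ^ r / t ^ s

/-- `chainSum f n y = Σ_{(i_0,…,i_y) ∈ T_y} (∏_{j=0}^y 1/(i_j-1)) · f i_y`, the sum over all
integer chains `i_0 = n > i_1 > ⋯ > i_y` with `i_j ≥ 2` for `1 ≤ j ≤ y`. -/
noncomputable def chainSum (f : ℕ → ℝ) : ℕ → ℕ → ℝ
  | n, 0 => (1 / ((n : ℝ) - 1)) * f n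
  | n, y + 1 => (1 / ((n : ℝ) - 1)) * ∑ i ∈ Finset.Icc 2 (n - 1), chainSum f i y

/-!
Write `L = log (1 - x)`. Integrating `L^m t^(-n)` by parts and using
`1 / ((1 - t) t^(n-1)) = 1 / (1 - t) + ∑_{k=1}^{n-1} 1 / t^k` gives the reduction formula
`(n - 1) A(m,n,x) = L^m - L^m / x^(n-1) - m ∑_{k=1}^{n-1} A(m-1,k,x)`. Rather than integrating
by parts an improper integral, we show that the difference of the two sides has derivative zero
on `(0,1)` and tends to `0` at `0⁺`. Iterating the reduction on the terms with `k ≥ 2` (those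
with `k = 1` stay) expands `A(m,n,x)` over the chains `n > i_1 > ⋯ > i_y ≥ 2`: each step divides
by `i_j - 1` and contributes a factor `-(m - j)`, so a chain of length `y` carries
`(-1)^y m (m-1) ⋯ (m-y+1) = (-1)^y C(m,y) y!`.
-/

open Real Filter Set Topology

lemma hasDerivAt_log_one_sub {z : ℝ} (hz : z < 1) :
    HasDerivAt (fun t => log (1 - t)) (-1 / (1 - z)) z := by
  simpa using ((hasDerivAt_id z).const_sub 1).log (sub_pos.2 hz).ne'

/- `dslope (fun t => log (1 - t)) 0` is `log (1 - t) / t` extended continuously by `-1` at `0`;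
for `s ≤ r` it writes `log^r (1 - t) / t^s` as a function continuous on `(-∞, 1)`. -/
lemma continuousOn_dslope_log_one_sub :
    ContinuousOn (dslope (fun t => log (1 - t)) 0) (Iio 1) := by
  intro t ht
  refine ContinuousAt.continuousWithinAt ?_
  rcases eq_or_ne t 0 with rfl | h0
  · exact continuousAt_dslope_same.2 (hasDerivAt_log_one_sub ht).differentiableAt
  · exact (continuousAt_dslope_of_ne h0).2 (hasDerivAt_log_one_sub ht).continuousAt

lemma log_one_sub_pow_div_pow_eq_mul_dslope_pow {r s : ℕ} (hsr : s ≤ r) {t : ℝ} (ht : t ≠ 0) :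
    log (1 - t) ^ r / t ^ s = log (1 - t) ^ (r - s) * dslope (fun u => log (1 - u)) 0 t ^ s := by
  rw [dslope_of_ne _ ht, slope_def_field, sub_zero, sub_zero, log_one, sub_zero, div_pow,
    mul_div_assoc', ← pow_add, Nat.sub_add_cancel hsr]

lemma continuousOn_log_one_sub_pow_mul_dslope_pow (r s : ℕ) :
    ContinuousOn (fun t => log (1 - t) ^ r * dslope (fun u => log (1 - u)) 0 t ^ s) (Iio 1) :=
  (((continuousOn_const.sub continuousOn_id).log fun t ht => by
    simp only [mem_Iio] at ht; simp; linarith).pow r).mul (continuousOn_dslope_log_one_sub.pow s)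

lemma hasDerivAt_integral_of_continuousOn_Iio {f : ℝ → ℝ} {a b y : ℝ}
    (hf : ContinuousOn f (Iio b)) (ha : a < b) (hy : y < b) :
    HasDerivAt (fun u => ∫ t in a..u, f t) (f y) y :=
  intervalIntegral.integral_hasDerivAt_right
    (hf.mono fun _ ht => lt_of_le_of_lt ht.2 (max_lt ha hy)).intervalIntegrable
    (hf.stronglyMeasurableAtFilter isOpen_Iio y hy) (hf.continuousAt (isOpen_Iio.mem_nhds hy))

lemma eq_zero_of_hasDerivAt_zero_of_tendsto_nhdsGT {f : ℝ → ℝ} {a b x : ℝ}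
    (hf : ∀ z ∈ Ioo a b, HasDerivAt f 0 z) (hlim : Tendsto f (𝓝[>] a) (𝓝 0))
    (hx : x ∈ Ioo a b) : f x = 0 := by
  have hconst : ∀ z ∈ Ioo a b, f z = f x := fun z hz =>
    isOpen_Ioo.is_const_of_deriv_eq_zero isPreconnected_Ioo
      (fun w hw => (hf w hw).differentiableAt.differentiableWithinAt) (fun w hw => (hf w hw).deriv)
      hz hx
  refine tendsto_nhds_unique (tendsto_const_nhds.congr' ?_) hlim
  filter_upwards [Ioo_mem_nhdsGT (hx.1.trans hx.2)] with z hz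
  exact (hconst z hz).symm

lemma inv_one_sub_mul_pow_eq_sum {K : Type*} [Field K] {z : K} (hz0 : z ≠ 0) (hz1 : 1 - z ≠ 0)
    (p : ℕ) : ((1 - z) * z ^ p)⁻¹ = ∑ k ∈ Finset.Icc 1 p, (z ^ k)⁻¹ + (1 - z)⁻¹ := by
  induction p with
  | zero => simp
  | succ p ih =>
    rw [Finset.sum_Icc_succ_top (by omega), add_right_comm, ← ih]
    field_simp
    ring

lemma Aint_eq_integral_mul_dslope_pow {r s : ℕ} (hsr : s ≤ r) {y : ℝ} (hy : 0 ≤ y) :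
    Aint r s y =
      ∫ t in (0:ℝ)..y, log (1 - t) ^ (r - s) * dslope (fun u => log (1 - u)) 0 t ^ s := by
  refine intervalIntegral.integral_congr_ae (.of_forall fun t ht => ?_)
  rw [uIoc_of_le hy] at ht
  exact log_one_sub_pow_div_pow_eq_mul_dslope_pow hsr ht.1.ne'

lemma hasDerivAt_Aint {r s : ℕ} (hsr : s ≤ r) {x : ℝ} (hx0 : 0 < x) (hx1 : x < 1) :
    HasDerivAt (Aint r s) (log (1 - x) ^ r / x ^ s) x := by
  rw [log_one_sub_pow_div_pow_eq_mul_dslope_pow hsr hx0.ne']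
  refine (hasDerivAt_integral_of_continuousOn_Iio
    (continuousOn_log_one_sub_pow_mul_dslope_pow _ _) one_pos hx1).congr_of_eventuallyEq ?_
  filter_upwards [Ioi_mem_nhds hx0] with y hy
  exact Aint_eq_integral_mul_dslope_pow hsr (le_of_lt hy)

lemma tendsto_Aint_nhdsGT_zero {r s : ℕ} (hsr : s ≤ r) :
    Tendsto (Aint r s) (𝓝[>] 0) (𝓝 0) := by
  have h := (hasDerivAt_integral_of_continuousOn_Iio
    (continuousOn_log_one_sub_pow_mul_dslope_pow (r - s) s) one_pos one_pos).continuousAt.tendsto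
  rw [intervalIntegral.integral_same] at h
  refine (h.mono_left nhdsWithin_le_nhds).congr' ?_
  filter_upwards [self_mem_nhdsWithin] with y hy
  exact (Aint_eq_integral_mul_dslope_pow hsr (le_of_lt hy)).symm

lemma tendsto_log_one_sub_pow_div_pow_nhdsGT_zero {p q : ℕ} (hpq : p < q) :
    Tendsto (fun x => log (1 - x) ^ q / x ^ p) (𝓝[>] 0) (𝓝 0) := by
  have h := ((continuousOn_log_one_sub_pow_mul_dslope_pow (q - p) p).continuousAt
    (Iio_mem_nhds one_pos)).tendsto
  rw [sub_zero, log_one, zero_pow (Nat.sub_ne_zero_of_lt hpq), zero_mul] at h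
  refine (h.mono_left nhdsWithin_le_nhds).congr' ?_
  filter_upwards [self_mem_nhdsWithin] with y hy
  exact (log_one_sub_pow_div_pow_eq_mul_dslope_pow hpq.le (ne_of_gt hy)).symm

lemma sub_one_mul_Aint_eq {m n : ℕ} (hn : 1 ≤ n) (hnm : n ≤ m) {x : ℝ} (hx0 : 0 < x)
    (hx1 : x < 1) :
    ((n : ℝ) - 1) * Aint m n x = log (1 - x) ^ m - log (1 - x) ^ m / x ^ (n - 1)
      - m * ∑ k ∈ Finset.Icc 1 (n - 1), Aint (m - 1) k x := by
  obtain ⟨p, rfl⟩ : ∃ p, n = p + 1 := ⟨n - 1, by omega⟩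
  obtain ⟨q, rfl⟩ : ∃ q, m = q + 1 := ⟨m - 1, by omega⟩
  simp only [Nat.add_sub_cancel, Nat.cast_add, Nat.cast_one, add_sub_cancel_right]
  set D : ℝ → ℝ := fun z => p * Aint (q + 1) (p + 1) z - log (1 - z) ^ (q + 1)
    + log (1 - z) ^ (q + 1) / z ^ p + (q + 1) * ∑ k ∈ Finset.Icc 1 p, Aint q k z
  have hD : ∀ z ∈ Ioo 0 1, HasDerivAt D 0 z := by
    rintro z ⟨hz0, hz1⟩
    have hL := (hasDerivAt_log_one_sub hz1).fun_pow (q + 1)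
    have hS : HasDerivAt (fun z => ∑ k ∈ Finset.Icc 1 p, Aint q k z)
        (∑ k ∈ Finset.Icc 1 p, log (1 - z) ^ q / z ^ k) z :=
      HasDerivAt.fun_sum fun k hk => hasDerivAt_Aint (by simp at hk; omega) hz0 hz1
    refine (((((hasDerivAt_Aint (by omega) hz0 hz1).const_mul (p : ℝ)).sub hL).add
      (hL.div (hasDerivAt_pow p z) (by positivity))).add
      (hS.const_mul ((q : ℝ) + 1))).congr_deriv ?_
    have hsum := inv_one_sub_mul_pow_eq_sum hz0.ne' (by linarith) p
    have hpow : (p : ℝ) * z ^ (p - 1) = p * z ^ p / z := by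
      rcases p with _ | p
      · simp
      · rw [Nat.add_sub_cancel, pow_succ, ← mul_assoc, mul_div_cancel_right₀ _ hz0.ne']
    simp_rw [div_eq_mul_inv (log (1 - z) ^ q), ← Finset.mul_sum, eq_sub_of_add_eq hsum.symm, hpow]
    push_cast
    field_simp
    ring
  have hlim : Tendsto D (𝓝[>] 0) (𝓝 0) := by
    have hLm : Tendsto (fun z : ℝ => log (1 - z) ^ (q + 1)) (𝓝[>] 0) (𝓝 0) := by
      simpa using tendsto_log_one_sub_pow_div_pow_nhdsGT_zero (p := 0) (q := q + 1) (by omega)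
    simpa using ((((tendsto_Aint_nhdsGT_zero (by omega)).const_mul (p : ℝ)).sub hLm).add
      (tendsto_log_one_sub_pow_div_pow_nhdsGT_zero (by omega : p < q + 1))).add
      ((tendsto_finsetSum _ fun k hk => tendsto_Aint_nhdsGT_zero
        (by simp at hk; omega)).const_mul ((q : ℝ) + 1))
  have hDx := eq_zero_of_hasDerivAt_zero_of_tendsto_nhdsGT hD hlim ⟨hx0, hx1⟩
  simp only [D] at hDx
  linarith

lemma chainSum_sub (f g : ℕ → ℝ) (n y : ℕ) :
    chainSum (fun i => f i - g i) n y = chainSum f n y - chainSum g n y := by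
  induction y generalizing n with
  | zero => simp only [chainSum]; ring
  | succ y ih => simp only [chainSum, ih, Finset.sum_sub_distrib]; ring

lemma chainSum_const_mul (c : ℝ) (f : ℕ → ℝ) (n y : ℕ) :
    chainSum (fun i => c * f i) n y = c * chainSum f n y := by
  induction y generalizing n with
  | zero => simp only [chainSum]; ring
  | succ y ih => simp only [chainSum, ih, ← Finset.mul_sum]; ring

lemma chainSum_succ_eq_zero (f : ℕ → ℝ) {n y : ℕ} (h : n ≤ y + 2) :
    chainSum f n (y + 1) = 0 := by
  induction y generalizing n with
  | zero => simp [chainSum, show Finset.Icc 2 (n - 1) = ∅ by ext; simp; omega]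
  | succ y ih =>
    rw [chainSum, Finset.sum_eq_zero fun i hi => ih (by simp at hi; omega), mul_zero]

lemma sub_one_mul_chainSum_zero (f : ℕ → ℝ) {n : ℕ} (hn : 2 ≤ n) :
    ((n : ℝ) - 1) * chainSum f n 0 = f n := by
  rw [chainSum, ← mul_assoc, mul_one_div_cancel (sub_ne_zero.2 (Nat.cast_ne_one.2 (by omega))),
    one_mul]

lemma sub_one_mul_chainSum_succ (f : ℕ → ℝ) {n : ℕ} (hn : 2 ≤ n) (y : ℕ) :
    ((n : ℝ) - 1) * chainSum f n (y + 1) = ∑ i ∈ Finset.Icc 2 (n - 1), chainSum f i y := by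
  rw [chainSum, ← mul_assoc, mul_one_div_cancel (sub_ne_zero.2 (Nat.cast_ne_one.2 (by omega))),
    one_mul]

theorem eq_sum_chainSum_of_sub_one_mul_eq (a g : ℕ → ℕ → ℝ)
    (hrec : ∀ m n : ℕ, 2 ≤ n → n ≤ m →
      ((n : ℝ) - 1) * a m n = g m n - m * ∑ k ∈ Finset.Icc 2 (n - 1), a (m - 1) k)
    {m n : ℕ} (hn : 2 ≤ n) (hnm : n ≤ m) :
    a m n = ∑ y ∈ Finset.range (n - 1),
      (-1) ^ y * (m.descFactorial y : ℝ) * chainSum (g (m - y)) n y := by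
  induction n using Nat.strong_induction_on generalizing m with | _ n ih =>
  obtain ⟨m, rfl⟩ : ∃ m', m = m' + 1 := ⟨m - 1, by omega⟩
  have hinner : ∀ i ∈ Finset.Icc 2 (n - 1), ∑ y ∈ Finset.range (n - 2),
      (-1) ^ y * (m.descFactorial y : ℝ) * chainSum (g (m - y)) i y = a m i := by
    intro i hi
    rw [Finset.mem_Icc] at hi
    rw [ih i (by omega) (by omega) (by omega)]
    refine (Finset.sum_subset (Finset.range_subset_range.2 (by omega)) fun y _ hy => ?_).symm
    obtain ⟨y, rfl⟩ : ∃ y', y = y' + 1 := ⟨y - 1, by simp at hy; omega⟩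
    rw [chainSum_succ_eq_zero _ (by simp at hy; omega), mul_zero]
  have hfirst : ((n : ℝ) - 1) * ((-1) ^ 0 * ((m + 1).descFactorial 0 : ℝ)
      * chainSum (g (m + 1 - 0)) n 0) = g (m + 1) n := by
    simp [sub_one_mul_chainSum_zero _ hn]
  have hnext : ∀ y, ((n : ℝ) - 1) * ((-1) ^ (y + 1) * ((m + 1).descFactorial (y + 1) : ℝ)
      * chainSum (g (m + 1 - (y + 1))) n (y + 1)) = -((m + 1) * ∑ i ∈ Finset.Icc 2 (n - 1),
        (-1) ^ y * (m.descFactorial y : ℝ) * chainSum (g (m - y)) i y) := by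
    intro y
    rw [Nat.succ_descFactorial_succ, Nat.add_sub_add_right, mul_left_comm,
      sub_one_mul_chainSum_succ _ hn, Finset.mul_sum, Finset.mul_sum, ← Finset.sum_neg_distrib]
    refine Finset.sum_congr rfl fun i _ => ?_
    push_cast
    ring
  have hn1 : (n : ℝ) - 1 ≠ 0 := sub_ne_zero.2 (Nat.cast_ne_one.2 (by omega))
  refine mul_left_cancel₀ hn1 ?_
  rw [show Finset.range (n - 1) = Finset.range (n - 2 + 1) by congr 1; omega,
    Finset.sum_range_succ', mul_add, Finset.mul_sum, hfirst]
  simp only [hnext]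
  rw [hrec _ _ hn hnm, Nat.add_sub_cancel, ← Finset.sum_congr rfl hinner, Finset.sum_comm,
    Finset.sum_neg_distrib, Finset.mul_sum]
  push_cast
  ring

theorem stmt3 (m n : ℕ) (hn : 2 ≤ n) (hmn : n ≤ m) (x : ℝ) (hx0 : 0 < x) (hx1 : x < 1) :
    Aint m n x =
      (∑ y ∈ Finset.range (n - 1), (m.choose y : ℝ) * (y.factorial : ℝ) * (-1 : ℝ) ^ (y + 1)
        * chainSum (fun i => (Real.log (1 - x)) ^ (m - y) / x ^ (i - 1)) n y)
      + (∑ y ∈ Finset.range (n - 1), (m.choose y : ℝ) * (y.factorial : ℝ) * (-1 : ℝ) ^ y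
        * chainSum (fun _ => (Real.log (1 - x)) ^ (m - y)) n y)
      + (∑ y ∈ Finset.range (n - 1), (m.choose (y + 1) : ℝ) * ((y + 1).factorial : ℝ)
        * (-1 : ℝ) ^ (y + 1) * chainSum (fun _ => Aint (m - y - 1) 1 x) n y) := by
  -- the three sums are one sum over `chainSum (g (m - y))`, as `C(m,y+1) (y+1)! = (m-y) C(m,y) y!`
  set g : ℕ → ℕ → ℝ := fun j i => log (1 - x) ^ j - log (1 - x) ^ j / x ^ (i - 1)
    - j * Aint (j - 1) 1 x
  have hrec : ∀ j i : ℕ, 2 ≤ i → i ≤ j → ((i : ℝ) - 1) * Aint j i x =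
      g j i - j * ∑ k ∈ Finset.Icc 2 (i - 1), Aint (j - 1) k x := by
    intro j i hi hij
    rw [sub_one_mul_Aint_eq (by omega) hij hx0 hx1, Finset.Icc_eq_cons_Ioc (by omega),
      Finset.sum_cons, ← Finset.Icc_add_one_left_eq_Ioc]
    simp only [g, Nat.reduceAdd]
    ring
  rw [eq_sum_chainSum_of_sub_one_mul_eq (fun m n => Aint m n x) g hrec hn hmn,
    ← Finset.sum_add_distrib, ← Finset.sum_add_distrib]
  refine Finset.sum_congr rfl fun y _ => ?_
  have hchoose : (m.choose (y + 1) : ℝ) * ((y + 1).factorial : ℝ)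
      = (m - y : ℕ) * (m.descFactorial y : ℝ) := by
    rw [mul_comm, ← Nat.cast_mul, ← Nat.cast_mul, ← Nat.descFactorial_eq_factorial_mul_choose,
      Nat.descFactorial_succ]
  rw [chainSum_sub, chainSum_sub, chainSum_const_mul, hchoose,
    Nat.descFactorial_eq_factorial_mul_choose]
  push_cast
  ring
end

section
/- Let m, n be integers with m ≥ n ≥ 2 and let x > 0 be a real number. Write B(r,s,y) := ∫₀^y log^r(1+t)/t^s dt. For 0 ≤ y ≤ n−2, let T_y be the set of integer chains (i_0, i_1, …, i_y) with i_0 = n and i_{j−1} > i_j ≥ 2 for 1 ≤ j ≤ y (for y = 0 the chain is the single entry i_0 = n), and for such a chain set W := ∏_{j=0}^{y} 1/(i_j − 1). Then B(m,n,x) = Σ_{y=0}^{n−2} C(m,y)·y!·Σ_{(i_0,…,i_y)∈T_y} W·(−1)^{n+i_y+y+1}·log^{m−y}(1+x)/x^{i_y−1} + Σ_{y=0}^{n−2} C(m,y)·y!·Σ_{(i_0,…,i_y)∈T_y} W·(−1)^{n+y+1}·log^{m−y}(1+x) + Σ_{y=0}^{n−2} C(m,y+1)·(y+1)!·Σ_{(i_0,…,i_y)∈T_y}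 W·(−1)^{n+y}·B(m−y−1,1,x), where C(m,y) denotes the binomial coefficient. -/
/-- `B r s y = ∫₀^y log^r(1+t)/t^s dt`. -/
noncomputable def Bint (r s : ℕ) (y : ℝ) : ℝ := ∫ t in (0:ℝ)..y, (Real.log (1 + t)) ^ r / t ^ s

/-!
Since `log (1 + t) ≤ t`, the integrand of `B(m,n,x)` is bounded near `0` when `n ≤ m`.
Integrating `log^m(1+t)/t^n` against a primitive that vanishes at `0`, and expanding
`1/(t^{n-1}(1+t))` into partial fractions, gives the recursion
`(n-1) B(m,n,x) = boundary terms + m Σ_{j=1}^{n-1} ± B(m-1,j,x)`.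
The term `j = 1` is left as it is; unfolding the terms `2 ≤ j < n` again and again runs over the
chains `n = i_0 > i_1 > ⋯ > i_y ≥ 2`, each step contributing a factor `1/(i_j - 1)`, a sign, and a
factor of the falling factorial `m (m-1) ⋯ (m-y+1) = C(m,y) y!`.
-/

open Real Filter Topology MeasureTheory intervalIntegral Finset

lemma log_one_add_pow_div_pow_le {r s : ℕ} (hsr : s ≤ r) {t : ℝ} (ht : 0 < t) :
    log (1 + t) ^ r / t ^ s ≤ t ^ (r - s) := by
  have hlog : log (1 + t) ≤ t := by linarith [log_le_sub_one_of_pos (x := 1 + t) (by linarith)]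
  calc log (1 + t) ^ r / t ^ s ≤ t ^ r / t ^ s := by
        gcongr
        exact log_nonneg (by linarith)
    _ = t ^ (r - s) := by rw [pow_sub₀ t ht.ne' hsr, div_eq_mul_inv]

lemma tendsto_log_one_add_pow_div_pow_nhdsGT_zero {r s : ℕ} (hsr : s < r) :
    Tendsto (fun t => log (1 + t) ^ r / t ^ s) (𝓝[>] 0) (𝓝 0) := by
  have hpow : Tendsto (fun t : ℝ => t ^ (r - s)) (𝓝[>] 0) (𝓝 0) :=
    ((continuous_pow (r - s)).tendsto' 0 0 (zero_pow (by omega))).mono_left nhdsWithin_le_nhds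
  refine squeeze_zero' ?_ ?_ hpow
  · filter_upwards [self_mem_nhdsWithin] with t (ht : 0 < t)
    have := log_nonneg (by linarith : (1 : ℝ) ≤ 1 + t)
    positivity
  · filter_upwards [self_mem_nhdsWithin] with t ht
    exact log_one_add_pow_div_pow_le hsr.le ht

lemma continuousOn_log_one_add_pow_div_pow {r s : ℕ} (hsr : s < r) :
    ContinuousOn (fun t => log (1 + t) ^ r / t ^ s) (Set.Ici 0) := by
  intro t (ht : 0 ≤ t)
  rcases ht.eq_or_lt with rfl | ht
  · refine continuousWithinAt_Ioi_iff_Ici.mp ?_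
    have h0 : log (1 + 0) ^ r / (0 : ℝ) ^ s = 0 := by simp [zero_pow (by omega : r ≠ 0)]
    rw [ContinuousWithinAt, h0]
    exact tendsto_log_one_add_pow_div_pow_nhdsGT_zero hsr
  · have : (1 : ℝ) + t ≠ 0 := by linarith
    have : t ^ s ≠ 0 := by positivity
    exact ContinuousAt.continuousWithinAt (by fun_prop (disch := assumption))

lemma intervalIntegrable_log_one_add_pow_div_pow {r s : ℕ} (hsr : s ≤ r) {x : ℝ} (hx : 0 ≤ x) :
    IntervalIntegrable (fun t => log (1 + t) ^ r / t ^ s) volume 0 x := by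
  refine (continuous_pow (r - s)).intervalIntegrable 0 x |>.mono_fun' ?_ ?_
  · rw [Set.uIoc_of_le hx]
    refine ContinuousOn.aestronglyMeasurable (fun t ht => ?_) measurableSet_Ioc
    have : (1 : ℝ) + t ≠ 0 := by linarith [ht.1]
    have : t ^ s ≠ 0 := pow_ne_zero _ ht.1.ne'
    exact ContinuousAt.continuousWithinAt (by fun_prop (disch := assumption))
  · rw [Set.uIoc_of_le hx]
    filter_upwards [ae_restrict_mem measurableSet_Ioc] with t ht
    have := log_nonneg (by linarith [ht.1] : (1 : ℝ) ≤ 1 + t)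
    rw [norm_of_nonneg (by have := ht.1; positivity)]
    exact log_one_add_pow_div_pow_le hsr ht.1

lemma sum_Icc_neg_one_pow_div_pow (k : ℕ) {t : ℝ} (ht : t ≠ 0) (ht1 : 1 + t ≠ 0) :
    ∑ j ∈ Icc 1 k, (-1) ^ (k + j) / t ^ j = (1 / t ^ k - (-1) ^ k) / (1 + t) := by
  induction k with
  | zero => simp
  | succ k ih =>
    rw [sum_Icc_succ_top (by omega)]
    have hflip : ∑ j ∈ Icc 1 k, (-1 : ℝ) ^ (k + 1 + j) / t ^ j
        = -∑ j ∈ Icc 1 k, (-1) ^ (k + j) / t ^ j := by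
      rw [← sum_neg_distrib]
      exact sum_congr rfl fun j _ => by ring
    rw [hflip, ih, Even.neg_one_pow ⟨k + 1, rfl⟩]
    field_simp
    ring

lemma hasDerivAt_log_one_add_pow {t : ℝ} (ht : 1 + t ≠ 0) (r : ℕ) :
    HasDerivAt (fun u => log (1 + u) ^ r) (r * log (1 + t) ^ (r - 1) / (1 + t)) t := by
  have hlog : HasDerivAt (fun u => log (1 + u)) (1 / (1 + t)) t := by
    simpa using ((hasDerivAt_id t).const_add 1).log ht
  exact (hlog.pow r).congr_deriv (by ring)

/-- The constant `(-1)^k` next to `-1/u^k` makes this primitive vanish at `0`, and turns the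
`1/(1+t)` left by differentiating `log^{m+1}(1+u)` into a finite sum over `1/t^j`. -/
lemma hasDerivAt_Bint_primitive (m : ℕ) {k : ℕ} (hk : k ≠ 0) {t : ℝ} (ht : t ≠ 0)
    (ht1 : 1 + t ≠ 0) :
    HasDerivAt (fun u => ((-1) ^ k * log (1 + u) ^ (m + 1) - log (1 + u) ^ (m + 1) / u ^ k) / k)
      (log (1 + t) ^ (m + 1) / t ^ (k + 1)
        - (m + 1) / k * ∑ j ∈ Icc 1 k, (-1) ^ (k + j) * (log (1 + t) ^ m / t ^ j)) t := by
  have hL := hasDerivAt_log_one_add_pow ht1 (m + 1)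
  have hG := ((hL.const_mul ((-1) ^ k)).sub
    (hL.div (hasDerivAt_pow k t) (pow_ne_zero _ ht))).div_const k
  refine hG.congr_deriv ?_
  have hsum : ∑ j ∈ Icc 1 k, (-1 : ℝ) ^ (k + j) * (log (1 + t) ^ m / t ^ j)
      = log (1 + t) ^ m * ((1 / t ^ k - (-1) ^ k) / (1 + t)) := by
    rw [← sum_Icc_neg_one_pow_div_pow k ht ht1, mul_sum]
    exact sum_congr rfl fun j _ => by ring
  obtain ⟨k, rfl⟩ := Nat.exists_eq_add_one_of_ne_zero hk
  rw [hsum]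
  push_cast
  field_simp
  ring

lemma Bint_succ_succ {m k : ℕ} (hk : k ≠ 0) (hkm : k ≤ m) {x : ℝ} (hx : 0 ≤ x) :
    Bint (m + 1) (k + 1) x = ((-1) ^ k * log (1 + x) ^ (m + 1) - log (1 + x) ^ (m + 1) / x ^ k
      + (m + 1) * ∑ j ∈ Icc 1 k, (-1) ^ (k + j) * Bint m j x) / k := by
  have hint : ∀ j ∈ Icc 1 k, IntervalIntegrable
      (fun t => (-1) ^ (k + j) * (log (1 + t) ^ m / t ^ j)) volume 0 x := fun j hj =>
    (intervalIntegrable_log_one_add_pow_div_pow (by grind) hx).const_mul _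
  have hsum := IntervalIntegrable.sum _ hint
  rw [Finset.sum_fn] at hsum
  have hcont : ContinuousOn
      (fun u => ((-1) ^ k * log (1 + u) ^ (m + 1) - log (1 + u) ^ (m + 1) / u ^ k) / k)
      (Set.Icc 0 x) := by
    refine (ContinuousOn.sub ?_ ((continuousOn_log_one_add_pow_div_pow (by omega)).mono
      Set.Icc_subset_Ici_self)).div_const _
    intro t ht
    have : (1 : ℝ) + t ≠ 0 := by linarith [ht.1]
    exact ContinuousAt.continuousWithinAt (by fun_prop (disch := assumption))
  have hFTC := integral_eq_sub_of_hasDerivAt_of_le hx hcont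
    (fun t ht => hasDerivAt_Bint_primitive m hk ht.1.ne' (by linarith [ht.1]))
    ((intervalIntegrable_log_one_add_pow_div_pow (by omega) hx).sub (hsum.const_mul _))
  rw [integral_sub (intervalIntegrable_log_one_add_pow_div_pow (by omega) hx) (hsum.const_mul _),
    intervalIntegral.integral_const_mul, intervalIntegral.integral_finsetSum hint] at hFTC
  simp only [intervalIntegral.integral_const_mul, add_zero, log_one,
    zero_pow (Nat.succ_ne_zero m), mul_zero, zero_div, sub_zero] at hFTC
  unfold Bint
  have hk' : (k : ℝ) ≠ 0 := by exact_mod_cast hk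
  field_simp at hFTC ⊢
  linear_combination hFTC

lemma neg_one_pow_mul_Bint {m n : ℕ} (hn : 2 ≤ n) (hnm : n ≤ m) {x : ℝ} (hx : 0 ≤ x) :
    (-1) ^ n * Bint m n x =
      (-(-1) ^ n * log (1 + x) ^ m / x ^ (n - 1) - log (1 + x) ^ m + m * Bint (m - 1) 1 x
        - m * ∑ j ∈ Icc 2 (n - 1), (-1) ^ j * Bint (m - 1) j x) / ((n : ℝ) - 1) := by
  obtain ⟨k, rfl⟩ : ∃ k, n = k + 1 := ⟨n - 1, by omega⟩
  obtain ⟨m, rfl⟩ : ∃ m', m = m' + 1 := ⟨m - 1, by omega⟩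
  have hsplit : ∑ j ∈ Icc 1 k, (-1) ^ (k + j) * Bint m j x
      = (-1) ^ k * (-Bint m 1 x + ∑ j ∈ Icc 2 k, (-1) ^ j * Bint m j x) := by
    rw [← add_sum_Ioc_eq_sum_Icc (by omega), ← Icc_add_one_left_eq_Ioc, mul_add, mul_sum]
    norm_num [pow_add, mul_assoc]
  have hsq : ((-1 : ℝ) ^ k) ^ 2 = 1 := by rw [← pow_mul, mul_comm, pow_mul]; simp
  rw [Bint_succ_succ (by omega) (by omega) hx, hsplit]
  simp only [Nat.add_sub_cancel, Nat.cast_add, Nat.cast_one, add_sub_cancel_right]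
  rw [pow_succ]
  linear_combination (-log (1 + x) ^ (m + 1) + (m + 1) * Bint m 1 x
    - (m + 1) * ∑ j ∈ Icc 2 k, (-1) ^ j * Bint m j x) / k * hsq

namespace chainSum

variable (f g : ℕ → ℝ)

lemma eq_zero_of_le : ∀ {n y : ℕ}, 0 < n → n ≤ y + 1 → chainSum f n y = 0
  | n, 0, hn, hny => by simp [chainSum, show n = 1 by omega]
  | n, y + 1, _, hny => by
    rw [chainSum, sum_eq_zero fun i hi => eq_zero_of_le (by grind) (by grind), mul_zero]

lemma add (n y : ℕ) : chainSum (fun i => f i + g i) n y = chainSum f n y + chainSum g n y := by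
  induction y generalizing n with
  | zero => simp only [chainSum]; ring
  | succ y ih => simp only [chainSum, ih, sum_add_distrib]; ring

lemma const_mul (c : ℝ) (n y : ℕ) : chainSum (fun i => c * f i) n y = c * chainSum f n y := by
  induction y generalizing n with
  | zero => simp only [chainSum]; ring
  | succ y ih => simp only [chainSum, ih, ← mul_sum]; ring

end chainSum

theorem eq_sum_chainSum_of_recursion {u h : ℕ → ℕ → ℝ}
    (hu : ∀ m n, 2 ≤ n → n ≤ m →
      u m n = (h m n - m * ∑ k ∈ Icc 2 (n - 1), u (m - 1) k) / ((n : ℝ) - 1))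
    {m n : ℕ} (hn : 2 ≤ n) (hnm : n ≤ m) :
    u m n = ∑ y ∈ range (n - 1), (-1) ^ y * m.descFactorial y * chainSum (h (m - y)) n y := by
  induction n using Nat.strong_induction_on generalizing m with
  | _ n ih =>
  have ih' : ∀ k ∈ Icc 2 (n - 1), u (m - 1) k = ∑ y ∈ range (n - 2),
      (-1) ^ y * (m - 1).descFactorial y * chainSum (h (m - 1 - y)) k y := by
    intro k hk
    rw [mem_Icc] at hk
    rw [ih k (by omega) hk.1 (by omega)]
    refine sum_subset (range_subset_range.2 (by omega)) fun y _ hy => ?_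
    rw [chainSum.eq_zero_of_le _ (by omega) (by simp only [mem_range, not_lt] at hy; omega), mul_zero]
  obtain ⟨n, rfl⟩ : ∃ n', n = n' + 2 := ⟨n - 2, by omega⟩
  obtain ⟨m, rfl⟩ : ∃ m', m = m' + 1 := ⟨m - 1, by omega⟩
  rw [hu _ _ hn hnm, sum_congr rfl ih', sum_comm, show n + 2 - 1 = n + 1 by omega,
    sum_range_succ']
  simp only [chainSum, Nat.succ_descFactorial_succ, mul_sum, Nat.add_sub_cancel,
    Nat.add_sub_add_right, Nat.sub_zero]
  rw [sub_div, sub_eq_neg_add, sum_div, ← sum_neg_distrib]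
  congr 1
  · refine sum_congr rfl fun y _ => ?_
    rw [sum_div, ← sum_neg_distrib]
    refine sum_congr rfl fun i _ => ?_
    push_cast
    ring
  · simp [div_eq_inv_mul]

lemma choose_succ_mul_factorial_succ (m y : ℕ) :
    m.choose (y + 1) * (y + 1).factorial = m.choose y * y.factorial * (m - y) := by
  rw [mul_comm, ← Nat.descFactorial_eq_factorial_mul_choose, Nat.descFactorial_succ,
    Nat.descFactorial_eq_factorial_mul_choose]
  ring

theorem stmt6 (m n : ℕ) (hn : 2 ≤ n) (hmn : n ≤ m) (x : ℝ) (hx : 0 < x) :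
    Bint m n x =
      (∑ y ∈ Finset.range (n - 1), (m.choose y : ℝ) * (y.factorial : ℝ)
        * chainSum (fun i =>
            (-1 : ℝ) ^ (n + i + y + 1) * (Real.log (1 + x)) ^ (m - y) / x ^ (i - 1)) n y)
      + (∑ y ∈ Finset.range (n - 1), (m.choose y : ℝ) * (y.factorial : ℝ)
        * chainSum (fun _ => (-1 : ℝ) ^ (n + y + 1) * (Real.log (1 + x)) ^ (m - y)) n y)
      + (∑ y ∈ Finset.range (n - 1), (m.choose (y + 1) : ℝ) * ((y + 1).factorial : ℝ)
        * chainSum (fun _ => (-1 : ℝ) ^ (n + y) * Bint (m - y - 1) 1 x) n y) := by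
  have key := eq_sum_chainSum_of_recursion (u := fun m n => (-1) ^ n * Bint m n x)
    (h := fun m i => -(-1) ^ i * log (1 + x) ^ m / x ^ (i - 1) - log (1 + x) ^ m
      + m * Bint (m - 1) 1 x)
    (fun m n hn hnm => neg_one_pow_mul_Bint hn hnm hx.le) hn hmn
  calc Bint m n x = (-1) ^ n * ((-1) ^ n * Bint m n x) := by
        rw [← mul_assoc, ← pow_add, Even.neg_one_pow ⟨n, rfl⟩, one_mul]
    _ = _ := by
      rw [key, mul_sum, ← sum_add_distrib, ← sum_add_distrib]
      refine sum_congr rfl fun y _ => ?_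
      rw [← Nat.cast_mul, ← Nat.cast_mul, choose_succ_mul_factorial_succ,
        Nat.descFactorial_eq_factorial_mul_choose]
      simp only [← chainSum.const_mul, ← chainSum.add]
      congr 1
      funext i
      push_cast
      ring
end

section
/- Let a < b be real numbers and let (u_n)_{n≥1} be a sequence of functions on [a,b] with u_n(x) ≥ 0 for all n and all x ∈ [a,b], such that: each u_n is integrable on [a,b]; the series Σ_{n=1}^∞ u_n(x) converges for every x with a ≤ x < b and Σ_{n=1}^∞ u_n(b) = ∞; the improper integral ∫_a^b Σ_{n=1}^∞ u_n(x) dx converges; and Σ_{n=1}^∞ u_n converges uniformly on every closed subinterval [c,d] with a ≤ c < d < b. Then ∫_a^b Σ_{n=1}^∞ u_n(x) dx = Σ_{n=1}^∞ ∫_a^b u_n(x) dx. -/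
/-!
On every `[a, d]` with `d < b` the uniform convergence of the partial sums makes `∑ uₙ`
integrable, so dominated convergence (with the nonnegative terms as their own dominating series)
gives `∫ₐᵈ ∑ uₙ = ∑ ∫ₐᵈ uₙ`. As `d → b⁻`, each term `∫ₐᵈ uₙ` increases to `∫ₐᵇ uₙ`, and for
nonnegative terms increasing to their limits the limit of the sums is the sum of the limits:
finite partial sums of the limits are bounded by `I`, and each sum is bounded by the sum of
the limits.
-/

open Filter MeasureTheory Set Topology Interval

theorem TendstoUniformlyOn.integrableOn {α ι E : Type*} [MeasurableSpace α] {μ : Measure α}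
    [NormedAddCommGroup E] {l : Filter ι} [l.NeBot] [l.IsCountablyGenerated]
    {F : ι → α → E} {f : α → E} {s : Set α} (h : TendstoUniformlyOn F f l s)
    (hF : ∀ i, IntegrableOn (F i) s μ) (hs : MeasurableSet s) (hμs : μ s ≠ ⊤) :
    IntegrableOn f s μ := by
  have hmeas : AEStronglyMeasurable f (μ.restrict s) :=
    aestronglyMeasurable_of_tendsto_ae l (fun i => (hF i).aestronglyMeasurable)
      ((ae_restrict_iff' hs).2 (.of_forall fun x hx => h.tendsto_at hx))
  obtain ⟨i, hi⟩ := (Metric.tendstoUniformlyOn_iff.mp h 1 one_pos).exists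
  refine Integrable.mono' ((hF i).norm.add (integrableOn_const (C := (1 : ℝ)) hμs)) hmeas ?_
  filter_upwards [ae_restrict_mem hs] with x hx
  have hclose : ‖f x - F i x‖ < 1 := by simpa [dist_eq_norm] using hi x hx
  simp only [Pi.add_apply]
  linarith [norm_sub_norm_le (f x) (F i x)]

theorem intervalIntegral.hasSum_integral_tsum_of_nonneg {ι : Type*} [Countable ι] {μ : Measure ℝ}
    {a b : ℝ} {u : ι → ℝ → ℝ} (hu_nonneg : ∀ i, ∀ x ∈ Ι a b, 0 ≤ u i x)
    (hu : ∀ i, IntervalIntegrable (u i) μ a b) (hsum : ∀ x ∈ Ι a b, Summable fun i => u i x)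
    (htsum : IntervalIntegrable (fun x => ∑' i, u i x) μ a b) :
    HasSum (fun i => ∫ x in a..b, u i x ∂μ) (∫ x in a..b, ∑' i, u i x ∂μ) :=
  hasSum_integral_of_dominated_convergence u (fun i => (hu i).def'.aestronglyMeasurable)
    (fun i => .of_forall fun x hx => (Real.norm_of_nonneg (hu_nonneg i x hx)).le)
    (.of_forall hsum) htsum (.of_forall fun x hx => (hsum x hx).hasSum)

theorem intervalIntegral.hasSum_integral_tsum_of_tendstoUniformlyOn {μ : Measure ℝ}
    [IsLocallyFiniteMeasure μ] {u : ℕ → ℝ → ℝ} {a b : ℝ} (hab : a ≤ b)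
    (hu_nonneg : ∀ n, ∀ x ∈ Ioc a b, 0 ≤ u n x) (hu : ∀ n, IntervalIntegrable (u n) μ a b)
    (hsum : ∀ x ∈ Ioc a b, Summable fun n => u n x)
    (hunif : TendstoUniformlyOn (fun N x => ∑ n ∈ Finset.range N, u n x)
      (fun x => ∑' n, u n x) atTop (Ioc a b)) :
    HasSum (fun n => ∫ x in a..b, u n x ∂μ) (∫ x in a..b, ∑' n, u n x ∂μ) := by
  have htsum : IntervalIntegrable (fun x => ∑' n, u n x) μ a b := by
    rw [intervalIntegrable_iff_integrableOn_Ioc_of_le hab]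
    refine hunif.integrableOn (fun N => ?_) measurableSet_Ioc measure_Ioc_lt_top.ne
    exact integrable_finsetSum _ fun n _ =>
      (intervalIntegrable_iff_integrableOn_Ioc_of_le hab).1 (hu n)
  rw [← uIoc_of_le hab] at hu_nonneg hsum
  exact hasSum_integral_tsum_of_nonneg hu_nonneg hu hsum htsum

theorem IntervalIntegrable.tendsto_integral_nhdsLT {μ : Measure ℝ} [NullSingletonClass μ]
    {f : ℝ → ℝ} {a b : ℝ} (h : IntervalIntegrable f μ a b) (hab : a < b) :
    Tendsto (fun d => ∫ x in a..d, f x ∂μ) (𝓝[<] b) (𝓝 (∫ x in a..b, f x ∂μ)) := by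
  refine ((intervalIntegral.continuousOn_primitive_interval' h left_mem_uIcc) b
    right_mem_uIcc).tendsto.mono_left (nhdsWithin_le_of_mem ?_)
  rw [uIcc_of_le hab.le]
  exact Icc_mem_nhdsLT hab

theorem hasSum_of_tendsto_of_le {ι α : Type*} {l : Filter α} [l.NeBot] {g : ι → α → ℝ}
    {G : ι → ℝ} {F : α → ℝ} {I : ℝ} (hg_nonneg : ∀ᶠ x in l, ∀ i, 0 ≤ g i x)
    (hg_le : ∀ᶠ x in l, ∀ i, g i x ≤ G i) (hg : ∀ i, Tendsto (g i) l (𝓝 (G i)))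
    (hF : ∀ᶠ x in l, HasSum (fun i => g i x) (F x)) (hFI : Tendsto F l (𝓝 I)) :
    HasSum G I := by
  have hG_nonneg : 0 ≤ G := fun i =>
    ge_of_tendsto (hg i) (hg_nonneg.mono fun x hx => hx i)
  have hpartial : ∀ s : Finset ι, ∑ i ∈ s, G i ≤ I := fun s =>
    le_of_tendsto_of_tendsto (tendsto_finsetSum s fun i _ => hg i) hFI
      ((hg_nonneg.and hF).mono fun x hx => sum_le_hasSum s (fun i _ => hx.1 i) hx.2)
  have hG : Summable G := summable_of_sum_le hG_nonneg hpartial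
  refine le_antisymm (hG.tsum_le_of_sum_le hpartial) ?_ ▸ hG.hasSum
  exact le_of_tendsto hFI ((hg_le.and hF).mono fun x hx => hasSum_le hx.1 hx.2 hG.hasSum)

theorem stmt13_general (a b : ℝ) (hab : a < b) (u : ℕ → ℝ → ℝ) (I : ℝ)
    (hnonneg : ∀ n, ∀ x ∈ Set.Icc a b, 0 ≤ u n x)
    (hint : ∀ n, IntervalIntegrable (u n) volume a b)
    (hconv : ∀ x, a ≤ x → x < b → Summable (fun n => u n x))
    (himp : Tendsto (fun d => ∫ x in a..d, ∑' n, u n x) (nhdsWithin b (Set.Iio b)) (nhds I))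
    (hunif : ∀ c d, a ≤ c → c < d → d < b →
      TendstoUniformlyOn (fun N x => ∑ n ∈ Finset.range N, u n x)
        (fun x => ∑' n, u n x) atTop (Set.Icc c d)) :
    I = ∑' n, ∫ x in a..b, u n x := by
  have hIoo : Ioo a b ∈ 𝓝[<] b := Ioo_mem_nhdsLT hab
  have hint_le : ∀ d ∈ Ioo a b, ∀ n, IntervalIntegrable (u n) volume a d := fun d hd n =>
    (hint n).mono_set (uIcc_subset_uIcc_left (by rw [uIcc_of_le hab.le]; exact ⟨hd.1.le, hd.2.le⟩))
  have hsum : ∀ d ∈ Ioo a b,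
      HasSum (fun n => ∫ x in a..d, u n x) (∫ x in a..d, ∑' n, u n x) := fun d hd =>
    intervalIntegral.hasSum_integral_tsum_of_tendstoUniformlyOn hd.1.le
      (fun n x hx => hnonneg n x ⟨hx.1.le, hx.2.trans hd.2.le⟩) (hint_le d hd)
      (fun x hx => hconv x hx.1.le (hx.2.trans_lt hd.2))
      ((hunif a d le_rfl hd.1 hd.2).mono Ioc_subset_Icc_self)
  refine (hasSum_of_tendsto_of_le ?_ ?_ (fun n => (hint n).tendsto_integral_nhdsLT hab)
    (mem_of_superset hIoo hsum) himp).tsum_eq.symm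
  · filter_upwards [hIoo] with d hd n
    exact intervalIntegral.integral_nonneg hd.1.le fun x hx =>
      hnonneg n x ⟨hx.1, hx.2.trans hd.2.le⟩
  · filter_upwards [hIoo] with d hd n
    exact intervalIntegral.integral_mono_interval le_rfl hd.1.le hd.2.le
      ((ae_restrict_iff' measurableSet_Ioc).2 (.of_forall fun x hx =>
        hnonneg n x (Ioc_subset_Icc_self hx))) (hint n)

theorem stmt13 (a b : ℝ) (hab : a < b) (u : ℕ → ℝ → ℝ) (I : ℝ)
    (hnonneg : ∀ n, ∀ x ∈ Set.Icc a b, 0 ≤ u n x)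
    (hint : ∀ n, IntervalIntegrable (u n) volume a b)
    (hconv : ∀ x, a ≤ x → x < b → Summable (fun n => u n x))
    (hdivb : ¬ Summable (fun n => u n b))
    (himp : Tendsto (fun d => ∫ x in a..d, ∑' n, u n x) (nhdsWithin b (Set.Iio b)) (nhds I))
    (hunif : ∀ c d, a ≤ c → c < d → d < b →
      TendstoUniformlyOn (fun N x => ∑ n ∈ Finset.range N, u n x)
        (fun x => ∑' n, u n x) atTop (Set.Icc c d)) :
    I = ∑' n, ∫ x in a..b, u n x :=
  stmt13_general a b hab u I hnonneg hint hconv himp hunif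
end

section
/- Let p, q be integers with p ≥ q ≥ 1 and let m be an integer with m ≥ 0 or m = −2. Write J(m,r,s) := ∫₀¹ x^m·Li_r(x)·Li_s(x) dx. Then J(m,p,q) = Σ_{x=1}^{q−1} Σ_{i_1=0}^{p−2} ((−1)^{i_1+1}/(m+1)^{i_1+1}) ⋯ Σ_{i_{x−1}=0}^{p−i_1−⋯−i_{x−2}−2} ((−1)^{i_{x−1}+1}/(m+1)^{i_{x−1}+1}) Σ_{i_x=0}^{p−i_1−⋯−i_{x−1}−2} ((−1)^{i_x}/(m+1)^{i_x+1})·ζ(p−i_1−⋯−i_x)·ζ(q−x+1) + Σ_{x=1}^{q−1} ((−1)^{p−2+x}/(m+1)^{p−2+x})·J(m,1,q−x+1)·N_{x−1} + Σ_{i_1=0}^{p−2} ((−1)^{i_1+1}/(m+1)^{i_1+1}) ⋯ Σ_{i_{q−1}=0}^{p−i_1−⋯−i_{q−2}−2} ((−1)^{i_{q−1}+1}/(m+1)^{i_{q−1}+1})·J(m,p−i_1−⋯−i_{q−1},1), where N_{x−1} := Σ_{i_1=0}^{p−2} ⋯ Σ_{i_{x−1}=0}^{p−i_1−⋯−i_{x−2}−2}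 1 is the number of (x−1)-tuples of nonnegative integers (i_1,…,i_{x−1}) with i_1+⋯+i_j ≤ p−2 for every j (N_0 := 1), the nested sums run over all tuples of nonnegative integers whose partial sums satisfy the indicated upper bounds, and empty sums (for x with q−x+1 indices unavailable, or when q = 1) are 0 while the length-0 nested sum is the single empty tuple. -/
/-- `J m r s = ∫₀¹ x^m · Li_r(x) · Li_s(x) dx` (with `x^m` a `zpow`, so `m` may be `-2`). -/
noncomputable def Jint (m : ℤ) (r s : ℕ) : ℝ := ∫ x in (0:ℝ)..1, x ^ m * Li r x * Li s x

/-- `nest18 m p y s f` is the nested sum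
`Σ_{i_1=0}^{p-s-2} ((-1)^{i_1+1}/(m+1)^{i_1+1}) Σ_{i_2=0}^{p-s-i_1-2} ⋯ f (s+i_1+⋯+i_y)`,
over all `y`-tuples of nonnegative integers whose partial sums satisfy the indicated bounds,
each index `i_j` contributing a factor `(-1)^{i_j+1}/(m+1)^{i_j+1}`. -/
noncomputable def nest18 (m : ℤ) (p : ℕ) : ℕ → ℕ → (ℕ → ℝ) → ℝ
  | 0, s, f => f s
  | y + 1, s, f => ∑ i ∈ Finset.range (p - s - 1),
      ((-1 : ℝ) ^ (i + 1) / ((m : ℝ) + 1) ^ (i + 1)) * nest18 m p y (s + i) f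

/-- `cnt18 p y s` is the number of `y`-tuples of nonnegative integers `(i_1, …, i_y)` with
`s + i_1 + ⋯ + i_j ≤ p - 2` for every `j`; `cnt18 p 0 s = 1` (the empty tuple). -/
def cnt18 (p : ℕ) : ℕ → ℕ → ℕ
  | 0, _ => 1
  | y + 1, s => ∑ i ∈ Finset.range (p - s - 1), cnt18 p y (s + i)

/-!
Expanding `Li p * Li q` as a double power series and integrating termwise gives
`J(m,p,q) = ∑_{a,b ≥ 1} 1 / (a^p b^q (m + 1 + a + b))`. Splitting the last factor as
`(m + 1) + a + b` yields, for `p, q ≥ 2`, the recurrence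
`(m + 1) J(m,p,q) + J(m,p-1,q) + J(m,p,q-1) = ζ(p) ζ(q)`. Solving it for `J(m,p,q)` and
iterating in `p` down to `1` expresses `J(m,p-s,q)` through `ζ`-products, `J(m,1,q)` and one
application of the operator `f ↦ nest18 m p 1 · f` to `t ↦ J(m,p-t,q-1)`; iterating this in `q`
gives the nested sums. The weights along a tuple telescope, so the `J(m,1,·)` terms only see
the number `cnt18` of tuples.
-/

open Finset MeasureTheory

lemma eq_sum_of_mul_succ_add {M : ℝ} (hM : M ≠ 0) {u c : ℕ → ℝ}
    (h : ∀ n, M * u (n + 1) + u n = c (n + 1)) (n : ℕ) :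
    u n = ∑ i ∈ range n, (-1) ^ i / M ^ (i + 1) * c (n - i) + (-1) ^ n / M ^ n * u 0 := by
  induction n with
  | zero => simp
  | succ n ih =>
    have hu : u (n + 1) = (c (n + 1) - u n) / M := by
      rw [eq_div_iff hM]
      linarith [h n]
    have hterm (i : ℕ) : (-1 : ℝ) ^ (i + 1) / M ^ (i + 1 + 1) * c (n + 1 - (i + 1)) =
        -M⁻¹ * ((-1) ^ i / M ^ (i + 1) * c (n - i)) := by
      rw [Nat.add_sub_add_right]
      ring
    rw [hu, ih, sum_range_succ', sum_congr rfl fun i _ => hterm i, ← mul_sum, Nat.sub_zero]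
    ring

noncomputable def jintTerm (m : ℤ) (p q : ℕ) (ab : ℕ × ℕ) : ℝ :=
  1 / (((ab.1 : ℝ) + 1) ^ p * ((ab.2 : ℝ) + 1) ^ q * ((m : ℝ) + ab.1 + ab.2 + 3))

section

variable {m : ℤ}

lemma jintTerm_denom_pos (hm : -2 ≤ m) (a b : ℕ) : 0 < (m : ℝ) + a + b + 3 := by
  have hm' : (-2 : ℝ) ≤ m := by exact_mod_cast hm
  linarith [a.cast_nonneg (α := ℝ), b.cast_nonneg (α := ℝ)]

lemma jintTerm_nonneg (hm : -2 ≤ m) (p q : ℕ) (ab : ℕ × ℕ) : 0 ≤ jintTerm m p q ab := by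
  have := jintTerm_denom_pos hm ab.1 ab.2
  unfold jintTerm
  positivity

lemma summable_one_div_mul_sqrt :
    Summable fun n : ℕ => 1 / (((n : ℝ) + 1) * √((n : ℝ) + 1)) := by
  refine ((summable_nat_add_iff 1).mpr
    (Real.summable_one_div_nat_rpow.mpr (by norm_num : (1 : ℝ) < 3 / 2))).congr fun n => ?_
  have hn : (0 : ℝ) < (n : ℝ) + 1 := by positivity
  push_cast
  rw [show (3 / 2 : ℝ) = 1 + 1 / 2 by norm_num, Real.rpow_add hn, Real.rpow_one,
    ← Real.sqrt_eq_rpow]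

lemma jintTerm_le (hm : -2 ≤ m) {p q : ℕ} (hp : 1 ≤ p) (hq : 1 ≤ q) (a b : ℕ) :
    jintTerm m p q (a, b) ≤
      1 / (((a : ℝ) + 1) * √((a : ℝ) + 1)) * (1 / (((b : ℝ) + 1) * √((b : ℝ) + 1))) := by
  have hm' : (-2 : ℝ) ≤ m := by exact_mod_cast hm
  set A : ℝ := (a : ℝ) + 1 with hA
  set B : ℝ := (b : ℝ) + 1 with hB
  have hA1 : 1 ≤ A := by simp [hA]
  have hB1 : 1 ≤ B := by simp [hB]
  have hsqrt : √A * √B ≤ (m : ℝ) + a + b + 3 := by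
    nlinarith [sq_nonneg (√A - √B), Real.sq_sqrt (by linarith : (0 : ℝ) ≤ A),
      Real.sq_sqrt (by linarith : (0 : ℝ) ≤ B)]
  have hpow : A * B ≤ A ^ p * B ^ q :=
    mul_le_mul (le_self_pow₀ hA1 (by omega)) (le_self_pow₀ hB1 (by omega)) (by positivity)
      (by positivity)
  rw [div_mul_div_comm, one_mul, jintTerm]
  apply one_div_le_one_div_of_le (by positivity)
  calc A * √A * (B * √B) = A * B * (√A * √B) := by ring
    _ ≤ A ^ p * B ^ q * ((m : ℝ) + a + b + 3) :=
      mul_le_mul hpow hsqrt (by positivity) (by positivity)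

lemma summable_jintTerm (hm : -2 ≤ m) {p q : ℕ} (hp : 1 ≤ p) (hq : 1 ≤ q) :
    Summable (jintTerm m p q) :=
  (summable_one_div_mul_sqrt.mul_of_nonneg summable_one_div_mul_sqrt
    (fun _ => by positivity) (fun _ => by positivity)).of_nonneg_of_le
    (jintTerm_nonneg hm p q) fun ⟨a, b⟩ => jintTerm_le hm hp hq a b

lemma summable_norm_pow_succ_div (p : ℕ) {x : ℝ} (hx : |x| < 1) :
    Summable fun n : ℕ => ‖x ^ (n + 1) / ((n : ℝ) + 1) ^ p‖ := by
  refine ((summable_nat_add_iff 1).mpr (summable_geometric_of_lt_one (abs_nonneg x) hx))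
    |>.of_nonneg_of_le (fun _ => norm_nonneg _) fun n => ?_
  rw [norm_div, norm_pow, norm_pow, Real.norm_eq_abs,
    Real.norm_of_nonneg (by positivity : (0 : ℝ) ≤ (n : ℝ) + 1)]
  exact div_le_self (by positivity) (one_le_pow₀ (by simp))

lemma Li_mul_Li (p q : ℕ) {x : ℝ} (hx : |x| < 1) :
    Li p x * Li q x = ∑' ab : ℕ × ℕ,
      x ^ (ab.1 + 1) / ((ab.1 : ℝ) + 1) ^ p * (x ^ (ab.2 + 1) / ((ab.2 : ℝ) + 1) ^ q) :=
  tsum_mul_tsum_of_summable_norm (summable_norm_pow_succ_div p hx)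
    (summable_norm_pow_succ_div q hx)

lemma summable_norm_one_div_pow {s : ℕ} (hs : 2 ≤ s) :
    Summable fun n : ℕ => ‖1 / ((n : ℝ) + 1) ^ s‖ :=
  ((summable_nat_add_iff 1).mpr (Real.summable_one_div_nat_pow.mpr hs)).congr fun n => by
    rw [Real.norm_of_nonneg (by positivity)]
    push_cast
    rfl

lemma zr_mul_zr {p q : ℕ} (hp : 2 ≤ p) (hq : 2 ≤ q) :
    zr p * zr q = ∑' ab : ℕ × ℕ, 1 / ((ab.1 : ℝ) + 1) ^ p * (1 / ((ab.2 : ℝ) + 1) ^ q) :=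
  tsum_mul_tsum_of_summable_norm (summable_norm_one_div_pow hp) (summable_norm_one_div_pow hq)

lemma integral_zpow_zero_one {n : ℤ} (hn : 0 ≤ n) :
    ∫ x in (0 : ℝ)..1, x ^ n = 1 / ((n : ℝ) + 1) := by
  rw [integral_zpow (Or.inl hn), one_zpow, zero_zpow _ (by omega), sub_zero]

/-- `-2 ≤ m` is what makes every exponent `m + a + b + 2` nonnegative. -/
lemma Jint_eq_tsum (hm : -2 ≤ m) {p q : ℕ} (hp : 1 ≤ p) (hq : 1 ≤ q) :
    Jint m p q = ∑' ab, jintTerm m p q ab := by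
  set F : ℕ × ℕ → ℝ → ℝ := fun ab x =>
    x ^ (m + ab.1 + ab.2 + 2) / (((ab.1 : ℝ) + 1) ^ p * ((ab.2 : ℝ) + 1) ^ q) with hF
  have hF_integral (ab : ℕ × ℕ) : ∫ x in Set.Ioo (0 : ℝ) 1, F ab x = jintTerm m p q ab := by
    rw [← integral_Ioc_eq_integral_Ioo, ← intervalIntegral.integral_of_le zero_le_one,
      intervalIntegral.integral_div, integral_zpow_zero_one (by omega), jintTerm, div_div]
    push_cast
    ring_nf
  have hF_integrable (ab : ℕ × ℕ) : IntegrableOn (F ab) (Set.Ioo (0 : ℝ) 1) :=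
    ((intervalIntegrable_iff_integrableOn_Ioc_of_le zero_le_one).mp
      ((intervalIntegral.intervalIntegrable_zpow (Or.inl (by omega))).div_const _)).mono_set
      Set.Ioo_subset_Ioc_self
  have hF_norm (ab : ℕ × ℕ) : ∫ x in Set.Ioo (0 : ℝ) 1, ‖F ab x‖ = jintTerm m p q ab := by
    rw [← hF_integral ab]
    refine setIntegral_congr_fun measurableSet_Ioo fun x hx => Real.norm_of_nonneg ?_
    have := hx.1.le
    positivity
  have hpointwise : ∀ x ∈ Set.Ioo (0 : ℝ) 1, x ^ m * Li p x * Li q x = ∑' ab, F ab x := by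
    rintro x ⟨hx0, hx1⟩
    rw [mul_assoc, Li_mul_Li p q (abs_lt.mpr ⟨by linarith, hx1⟩), ← tsum_mul_left]
    refine tsum_congr fun ab => ?_
    simp only [hF]
    rw [show m + ab.1 + ab.2 + 2 = m + ((ab.1 + 1 : ℕ) : ℤ) + ((ab.2 + 1 : ℕ) : ℤ) by
      push_cast; ring, zpow_add₀ hx0.ne', zpow_add₀ hx0.ne', zpow_natCast, zpow_natCast]
    ring
  calc Jint m p q = ∫ x in Set.Ioo (0 : ℝ) 1, x ^ m * Li p x * Li q x := by
        rw [Jint, intervalIntegral.integral_of_le zero_le_one, integral_Ioc_eq_integral_Ioo]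
    _ = ∫ x in Set.Ioo (0 : ℝ) 1, ∑' ab, F ab x := setIntegral_congr_fun measurableSet_Ioo hpointwise
    _ = ∑' ab, ∫ x in Set.Ioo (0 : ℝ) 1, F ab x :=
      (integral_tsum_of_summable_integral_norm hF_integrable
        ((summable_jintTerm hm hp hq).congr fun ab => (hF_norm ab).symm)).symm
    _ = ∑' ab, jintTerm m p q ab := tsum_congr hF_integral

lemma Jint_recurrence (hm : -2 ≤ m) {p q : ℕ} (hp : 1 ≤ p) (hq : 1 ≤ q) :
    ((m : ℝ) + 1) * Jint m (p + 1) (q + 1) + Jint m p (q + 1) + Jint m (p + 1) q =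
      zr (p + 1) * zr (q + 1) := by
  have hpq := summable_jintTerm hm (p := p + 1) (q := q + 1) (by omega) (by omega)
  rw [Jint_eq_tsum hm (by omega) (by omega), Jint_eq_tsum hm hp (by omega),
    Jint_eq_tsum hm (by omega) hq, zr_mul_zr (by omega) (by omega), ← tsum_mul_left,
    ← (hpq.mul_left _).tsum_add (summable_jintTerm hm hp (by omega)),
    ← ((hpq.mul_left _).add (summable_jintTerm hm hp (by omega))).tsum_add
      (summable_jintTerm hm (by omega) hq)]
  refine tsum_congr fun ⟨a, b⟩ => ?_
  have hD := (jintTerm_denom_pos hm a b).ne'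
  simp only [jintTerm]
  field_simp
  ring

lemma Jint_unroll (hm : -2 ≤ m) (hm₁ : m ≠ -1) {P Q : ℕ} (hP : 1 ≤ P) (hQ : 1 ≤ Q) :
    Jint m P (Q + 1) =
      ∑ i ∈ range (P - 1), (-1 : ℝ) ^ i / ((m : ℝ) + 1) ^ (i + 1) * zr (P - i) * zr (Q + 1)
      + ∑ i ∈ range (P - 1), (-1 : ℝ) ^ (i + 1) / ((m : ℝ) + 1) ^ (i + 1) * Jint m (P - i) Q
      + (-1 : ℝ) ^ (P - 1) / ((m : ℝ) + 1) ^ (P - 1) * Jint m 1 (Q + 1) := by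
  obtain ⟨n, rfl⟩ : ∃ n, P = n + 1 := ⟨P - 1, by omega⟩
  have hM : (m : ℝ) + 1 ≠ 0 := by exact_mod_cast (by omega : m + 1 ≠ 0)
  have := eq_sum_of_mul_succ_add hM (u := fun n => Jint m (n + 1) (Q + 1))
    (c := fun n => zr (n + 1) * zr (Q + 1) - Jint m (n + 1) Q)
    (fun n => by linarith [Jint_recurrence hm (p := n + 1) (by omega) hQ]) n
  rw [Nat.add_sub_cancel, this, ← sum_add_distrib]
  congr 1
  refine sum_congr rfl fun i hi => ?_
  rw [show n + 1 - i = n - i + 1 by have := mem_range.mp hi; omega]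
  ring

section Nested

variable {p : ℕ}

lemma nest18_congr {f g : ℕ → ℝ} (hfg : ∀ t < p, f t = g t) (y : ℕ) {s : ℕ} (hs : s < p) :
    nest18 m p y s f = nest18 m p y s g := by
  induction y generalizing s with
  | zero => exact hfg s hs
  | succ y ih =>
    simp only [nest18]
    exact sum_congr rfl fun i hi => by rw [ih (by have := mem_range.mp hi; omega)]

lemma nest18_add (f g : ℕ → ℝ) (y s : ℕ) :
    nest18 m p y s (fun t => f t + g t) = nest18 m p y s f + nest18 m p y s g := by
  induction y generalizing s with
  | zero => rfl
  | succ y ih => simp only [nest18, ih, mul_add, sum_add_distrib]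

lemma nest18_sum {ι : Type*} (S : Finset ι) (F : ι → ℕ → ℝ) (y s : ℕ) :
    nest18 m p y s (fun t => ∑ j ∈ S, F j t) = ∑ j ∈ S, nest18 m p y s (F j) := by
  induction y generalizing s with
  | zero => rfl
  | succ y ih =>
    simp only [nest18, ih, mul_sum]
    exact sum_comm

lemma nest18_mul_const (f : ℕ → ℝ) (c : ℝ) (y s : ℕ) :
    nest18 m p y s (fun t => f t * c) = nest18 m p y s f * c := by
  induction y generalizing s with
  | zero => rfl
  | succ y ih => simp only [nest18, ih, sum_mul, mul_assoc]

lemma nest18_succ (f : ℕ → ℝ) (y s : ℕ) :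
    nest18 m p (y + 1) s f = nest18 m p 1 s (fun t => nest18 m p y t f) := by
  simp only [nest18]

lemma nest18_sign (y s : ℕ) :
    nest18 m p y s (fun t => (-1 : ℝ) ^ (p - t - 1) / ((m : ℝ) + 1) ^ (p - t - 1)) =
      (-1 : ℝ) ^ (p - s - 1 + y) / ((m : ℝ) + 1) ^ (p - s - 1 + y) * cnt18 p y s := by
  induction y generalizing s with
  | zero => simp [nest18, cnt18]
  | succ y ih =>
    simp only [nest18, cnt18, ih, Nat.cast_sum, mul_sum]
    refine sum_congr rfl fun i hi => ?_
    have := mem_range.mp hi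
    simp only [← div_pow, ← mul_assoc, ← pow_add]
    rw [show i + 1 + (p - (s + i) - 1 + y) = p - s - 1 + (y + 1) by omega]

lemma nest18_iterate {f h : ℕ → ℕ → ℝ}
    (hf : ∀ k, ∀ s < p, f (k + 1) s = h k s + nest18 m p 1 s (f k)) (k : ℕ) :
    ∀ s < p, f k s = ∑ j ∈ range k, nest18 m p j s (h (k - 1 - j)) + nest18 m p k s (f 0) := by
  induction k with
  | zero => simp [nest18]
  | succ k ih =>
    intro s hs
    rw [hf k s hs, nest18_congr ih 1 hs, nest18_add, nest18_sum, ← nest18_succ, sum_range_succ',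
      nest18.eq_1, Nat.add_sub_cancel, Nat.sub_zero, add_right_comm, add_comm (h k s)]
    congr 2
    refine sum_congr rfl fun j hj => ?_
    rw [← nest18_succ, show k - 1 - j = k - (j + 1) by omega]

end Nested

lemma Jint_sub_eq_add_nest18 (hm : -2 ≤ m) (hm₁ : m ≠ -1) {p : ℕ} (k : ℕ) {s : ℕ} (hs : s < p) :
    Jint m (p - s) (k + 2) =
      (∑ i ∈ range (p - s - 1),
          (-1 : ℝ) ^ i / ((m : ℝ) + 1) ^ (i + 1) * zr (p - s - i) * zr (k + 2)
        + (-1 : ℝ) ^ (p - s - 1) / ((m : ℝ) + 1) ^ (p - s - 1) * Jint m 1 (k + 2))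
      + nest18 m p 1 s (fun t => Jint m (p - t) (k + 1)) := by
  rw [Jint_unroll hm hm₁ (by omega) (by omega)]
  simp only [nest18, Nat.sub_sub]
  ring

lemma Jint_eq_sum_nest18 (hm : -2 ≤ m) (hm₁ : m ≠ -1) {p : ℕ} (hp : 0 < p) (k : ℕ) :
    Jint m p (k + 1) =
      ∑ j ∈ range k,
        (nest18 m p j 0 (fun s => ∑ i ∈ range (p - s - 1),
            (-1 : ℝ) ^ i / ((m : ℝ) + 1) ^ (i + 1) * zr (p - s - i) * zr (k + 1 - j))
          + (-1 : ℝ) ^ (p - 1 + j) / ((m : ℝ) + 1) ^ (p - 1 + j) * Jint m 1 (k + 1 - j)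
            * cnt18 p j 0)
      + nest18 m p k 0 (fun t => Jint m (p - t) 1) := by
  have := nest18_iterate (f := fun k s => Jint m (p - s) (k + 1))
    (fun k s hs => Jint_sub_eq_add_nest18 hm hm₁ k hs) k 0 hp
  simp only [Nat.sub_zero] at this
  rw [this]
  congr 1
  refine sum_congr rfl fun j hj => ?_
  rw [show k - 1 - j + 2 = k + 1 - j by have := mem_range.mp hj; omega, nest18_add,
    nest18_mul_const (fun t => (-1 : ℝ) ^ (p - t - 1) / ((m : ℝ) + 1) ^ (p - t - 1)),
    nest18_sign]
  simp only [Nat.sub_zero]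
  ring

end

theorem stmt18 (p q : ℕ) (hq : 1 ≤ q) (hpq : q ≤ p) (m : ℤ) (hm : 0 ≤ m ∨ m = -2) :
    Jint m p q =
      (∑ x ∈ Finset.Icc 1 (q - 1), nest18 m p (x - 1) 0 (fun s =>
        ∑ i ∈ Finset.range (p - s - 1),
          ((-1 : ℝ) ^ i / ((m : ℝ) + 1) ^ (i + 1)) * zr (p - s - i) * zr (q - x + 1)))
      + (∑ x ∈ Finset.Icc 1 (q - 1),
          ((-1 : ℝ) ^ (p - 2 + x) / ((m : ℝ) + 1) ^ (p - 2 + x)) * Jint m 1 (q - x + 1)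
            * (cnt18 p (x - 1) 0 : ℝ))
      + nest18 m p (q - 1) 0 (fun s => Jint m (p - s) 1) := by
  obtain ⟨k, rfl⟩ : ∃ k, q = k + 1 := ⟨q - 1, by omega⟩
  have hIcc (F : ℕ → ℝ) : ∑ x ∈ Icc 1 k, F x = ∑ j ∈ range k, F (j + 1) := by
    rw [← Ico_add_one_right_eq_Icc, sum_Ico_eq_sum_range, Nat.add_sub_cancel]
    simp only [add_comm 1]
  rw [Nat.add_sub_cancel, hIcc, hIcc, ← sum_add_distrib,
    Jint_eq_sum_nest18 (by omega) (by omega) (by omega) k]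
  congr 1
  refine sum_congr rfl fun j hj => ?_
  have := mem_range.mp hj
  rw [Nat.add_sub_cancel, show p - 2 + (j + 1) = p - 1 + j by omega,
    show k + 1 - (j + 1) + 1 = k + 1 - j by omega]
end
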